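/- arXiv:2506.03603 — 8 statements merged into one kernel-verified Lean document; each statement's English description precedes it below -/
import Mathlib

section
/- Let W be the set of non-negative integers, and let F = {{i, i+1} : i ≥ 1} ∪ {{0} ∪ {i, i+1, i+2, ...} : i ≥ 1}. Then there is no tree T with vertex set W such that every member of F is the vertex set of a subtree (connected subgraph) of T. -/
open Set

universe u

/-- The intersection graph of a family `F` of sets: vertices are the members of `F`,
two distinct members adjacent iff they intersect. -/
def IntGraph {W : Type u} (F : Set (Set W)) : SimpleGraph F where
  Adj S T := S ≠ T ∧ ((S : Set W) ∩ (T : Set W)).Nonempty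
  symm := by
    constructor
    rintro S T ⟨h1, x, hx1, hx2⟩
    exact ⟨h1.symm, x, hx2, hx1⟩
  loopless := by constructor; rintro S ⟨h, _⟩; exact h rfl

/-- `G` has an induced cycle of length at least 4. -/
def HasLongInducedCycle {V : Type u} (G : SimpleGraph V) : Prop :=
  ∃ n : ℕ, 4 ≤ n ∧ ∃ f : ZMod n → V, Function.Injective f ∧
    ∀ i j : ZMod n, G.Adj (f i) (f j) ↔ (j = i + 1 ∨ i = j + 1)

/-- A graph is chordal iff it has no induced cycle of length at least 4. -/
def Chordal {V : Type u} (G : SimpleGraph V) : Prop := ¬ HasLongInducedCycle G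

/-- The chordal property for a family of sets: its intersection graph is chordal. -/
def ChordalProp {W : Type u} (F : Set (Set W)) : Prop := Chordal (IntGraph F)

/-- The finite Helly property: every nonempty finite subfamily whose members pairwise
intersect has a common element. -/
def FiniteHelly {W : Type u} (F : Set (Set W)) : Prop :=
  ∀ R : Finset (Set W), R.Nonempty → ↑R ⊆ F →
    (∀ S ∈ R, ∀ T ∈ R, S ≠ T → (S ∩ T).Nonempty) →
    (⋂ S ∈ R, S).Nonempty

/-- A family `F` is well-founded if there is no sequence `(Sᵢ)` of members of `F` with
nonempty total intersection such that no partial intersection `S₀ ∩ ⋯ ∩ Sᵢ` is contained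
in `S_{i+1}`. -/
def WellFoundedFamily {W : Type u} (F : Set (Set W)) : Prop :=
  ¬ ∃ S : ℕ → Set W, (∀ i, S i ∈ F) ∧ (⋂ i, S i).Nonempty ∧
      ∀ i, ¬ (⋂ j ≤ i, S j) ⊆ S (i + 1)

/-- `X` is `F`-connected: for every partition of `X` into two nonempty parts, some
member of `F` included in `X` meets both parts. -/
def FConnected {W : Type u} (F : Set (Set W)) (X : Set W) : Prop :=
  ∀ A B : Set W, A ∪ B = X → A ∩ B = ∅ → A.Nonempty → B.Nonempty →
    ∃ S ∈ F, S ⊆ X ∧ (S ∩ A).Nonempty ∧ (S ∩ B).Nonempty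

/-- A path-decomposition of `G` indexed by `Fin n`: bags cover all vertices and edges,
and for each vertex the set of indices of bags containing it is an interval. -/
def IsPathDecomp {V : Type u} (G : SimpleGraph V) {n : ℕ} (B : Fin n → Finset V) : Prop :=
  (∀ v, ∃ i, v ∈ B i) ∧
  (∀ u v, G.Adj u v → ∃ i, u ∈ B i ∧ v ∈ B i) ∧
  (∀ v : V, ∀ i i' i'' : Fin n, i ≤ i' → i' ≤ i'' → v ∈ B i → v ∈ B i'' → v ∈ B i')

/-- `G` has path-width at most `k`: some path-decomposition has all bags of size ≤ k+1. -/
def PathWidthLE {V : Type u} (G : SimpleGraph V) (k : ℕ) : Prop :=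
  ∃ (n : ℕ) (B : Fin n → Finset V), IsPathDecomp G B ∧ ∀ i, (B i).card ≤ k + 1

/-- `G` has line-width at most `k`: there is a decomposition indexed by a linearly ordered
set, satisfying the path-decomposition axioms, with all bags of size ≤ k+1. -/
def LineWidthLE {V : Type u} (G : SimpleGraph V) (k : ℕ) : Prop :=
  ∃ (L : Type u) (r : L → L → Prop), IsLinearOrder L r ∧
    ∃ B : L → Finset V,
      (∀ v, ∃ i, v ∈ B i) ∧
      (∀ u v, G.Adj u v → ∃ i, u ∈ B i ∧ v ∈ B i) ∧
      (∀ v i i' i'', r i i' → r i' i'' → v ∈ B i → v ∈ B i'' → v ∈ B i') ∧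
      ∀ i, (B i).card ≤ k + 1

/-- The family of the counterexample: pairs `{i, i+1}` for `i ≥ 1`, together with the
sets `{0} ∪ {i, i+1, i+2, ...}` for `i ≥ 1`. -/
def F0 : Set (Set ℕ) :=
  {A | ∃ i : ℕ, 1 ≤ i ∧ A = {i, i + 1}} ∪
  {A | ∃ i : ℕ, 1 ≤ i ∧ A = insert 0 {n : ℕ | i ≤ n}}

namespace SimpleGraph

variable {V : Type*} {G : SimpleGraph V}

lemma Connected.exists_adj_of_induce {s : Set V} (h : (G.induce s).Connected) {v w : V}
    (hv : v ∈ s) (hw : w ∈ s) (hvw : v ≠ w) : ∃ x ∈ s, G.Adj v x := by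
  obtain ⟨p⟩ := h.preconnected ⟨v, hv⟩ ⟨w, hw⟩
  have hp : ¬ p.Nil := Walk.not_nil_of_ne (by simpa using hvw)
  exact ⟨p.snd, p.snd.2, by simpa using p.adj_snd hp⟩

lemma reachable_of_adj_succ {G : SimpleGraph ℕ} {a b : ℕ} (hab : a ≤ b)
    (h : ∀ i, a ≤ i → i < b → G.Adj i (i + 1)) : G.Reachable a b := by
  induction b, hab using Nat.le_induction with
  | base => rfl
  | succ b hab ih =>
    exact (ih fun i hai hib ↦ h i hai (by omega)).trans (h b hab (by omega)).reachable

end SimpleGraph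

open SimpleGraph

/-- There is no tree with vertex set ℕ in which every member of `F0` induces a
connected subgraph. -/
theorem stmt0 :
    ¬ ∃ T : SimpleGraph ℕ, T.IsTree ∧ ∀ S ∈ F0, (T.induce S).Connected := by
  rintro ⟨T, hT, hconn⟩
  have hsucc : ∀ i, 1 ≤ i → T.Adj i (i + 1) := by
    intro i hi
    obtain ⟨x, hx, hix⟩ := (hconn _ (Or.inl ⟨i, hi, rfl⟩)).exists_adj_of_induce
      (by simp) (by simp) (by omega : i ≠ i + 1)
    obtain rfl | rfl := hx
    exacts [(T.irrefl hix).elim, hix]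
  have hzero : ∀ i, 1 ≤ i → ∃ m, i ≤ m ∧ T.Adj 0 m := by
    intro i hi
    obtain ⟨x, hx, h0x⟩ := (hconn _ (Or.inr ⟨i, hi, rfl⟩)).exists_adj_of_induce
      (by simp) (by simp) (by omega : 0 ≠ i)
    obtain rfl | hx := hx
    exacts [(T.irrefl h0x).elim, ⟨x, hx, h0x⟩]
  obtain ⟨m₁, hm₁, h₁⟩ := hzero 1 le_rfl
  obtain ⟨m₂, hm₂, h₂⟩ := hzero (m₁ + 1) (by omega)
  -- The path `0, m₁, m₁ + 1, …, m₂` avoids the edge `0 m₂`, which must be a bridge in a tree.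
  refine isBridge_iff.mp (isAcyclic_iff_forall_adj_isBridge.mp hT.isAcyclic h₂) ?_
  have hadj₁ : (T.deleteEdges {s(0, m₂)}).Adj 0 m₁ :=
    (deleteEdges_adj ..).mpr ⟨h₁, by simp only [mem_singleton_iff, Sym2.eq_iff]; omega⟩
  refine hadj₁.reachable.trans (reachable_of_adj_succ (by omega) fun i hi _ ↦ ?_)
  exact (deleteEdges_adj ..).mpr
    ⟨hsucc i (by omega), by simp only [mem_singleton_iff, Sym2.eq_iff]; omega⟩
end

section
/- Let F be a family of subsets of a finite set W satisfying the chordal property and the finite Helly property. Then there is a tree T with vertex set W such that every member of F is the vertex set of a subtree of T. -/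
open Set

universe u

/-!
Induction on the number of points. Chordality and the Helly property produce a point `w` and a
point `p ≠ w` such that every member of `F` containing `w` and another point also contains `p`:
take a simplicial vertex `S₀` of the intersection graph of the members with at least two points
(Dirac's lemma); its closed neighbourhood is pairwise intersecting, so by Helly it has a common
point `p`, and any `w ∈ S₀ \ {p}` works. Sending `w` to `p` preserves intersections, so the
traces of `F` on `W \ {w}` are again chordal and Helly; a tree for them with `w` hung as a leaf
at `p` is a tree for `F`.
-/

open SimpleGraph Set.Notation

theorem Set.card_compl_singleton_add_one {V : Type*} [Finite V] (w : V) :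
    Nat.card ({w}ᶜ : Set V) + 1 = Nat.card V := by
  rw [Nat.card_coe_set_eq, ← Set.ncard_add_ncard_compl {w}, Set.ncard_singleton, add_comm]

namespace SimpleGraph

variable {V : Type*} {G : SimpleGraph V}

namespace Walk

variable {u v : V} {p : G.Walk u v} {i j : ℕ}

theorem getVert_ne_of_length_eq_dist (hp : p.length = G.dist u v) (hij : i < j)
    (hj : j ≤ p.length) : p.getVert i ≠ p.getVert j := by
  intro h
  have := dist_le ((p.take i).append ((p.drop j).copy h.symm rfl))
  simp only [length_append, take_length, length_copy, drop_length] at this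
  omega

theorem adj_getVert_iff_of_length_eq_dist (hp : p.length = G.dist u v) (hij : i < j)
    (hj : j ≤ p.length) : G.Adj (p.getVert i) (p.getVert j) ↔ j = i + 1 := by
  refine ⟨fun h => ?_, fun h => h ▸ p.adj_getVert_succ (by omega)⟩
  have := dist_le ((p.take i).append (cons h (p.drop j)))
  simp only [length_append, take_length, length_cons, drop_length] at this
  omega

end Walk

theorem spanningCoe_induce_adj {s : Set V} {u v : V} :
    (G.induce s).spanningCoe.Adj u v ↔ G.Adj u v ∧ u ∈ s ∧ v ∈ s := by
  simp

theorem spanningCoe_induce_mono {s t : Set V} (hst : s ⊆ t) :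
    (G.induce s).spanningCoe ≤ (G.induce t).spanningCoe := fun _ _ h => by
  rw [spanningCoe_induce_adj] at h ⊢
  exact ⟨h.1, hst h.2.1, hst h.2.2⟩

theorem Reachable.mem_of_spanningCoe_induce {s : Set V} {u v : V}
    (h : (G.induce s).spanningCoe.Reachable u v) (hu : u ∈ s) : v ∈ s := by
  obtain ⟨q⟩ := h
  induction q with
  | nil => exact hu
  | cons h _ ih => exact ih (spanningCoe_induce_adj.1 h).2.2

theorem IsTree.spanningCoe_sup_edge [Finite V] {w p : V} (hp : p ≠ w)
    {T : SimpleGraph ({w}ᶜ : Set V)} (hT : T.IsTree) : (T.spanningCoe ⊔ edge w p).IsTree := by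
  rw [isTree_iff_connected_and_card] at hT ⊢
  have hwp : (T.spanningCoe ⊔ edge w p).Adj w p := Or.inr (by simp [edge_adj, hp.symm])
  refine ⟨(connected_iff_exists_forall_reachable _).2 ⟨p, fun x => ?_⟩, ?_⟩
  · by_cases hx : x = w
    · exact hx ▸ hwp.symm.reachable
    · exact (hT.1.preconnected ⟨p, hp⟩ ⟨x, hx⟩).map
        ((Hom.ofLE le_sup_left).comp (Embedding.spanningCoe T).toHom)
  have hedges : (T.spanningCoe ⊔ edge w p).edgeSet =
      insert s(w, p) (Sym2.map Subtype.val '' T.edgeSet) := by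
    rw [edgeSet_sup, edgeSet_edge_of_ne hp.symm, Set.union_singleton, SimpleGraph.spanningCoe,
      edgeSet_map]
    rfl
  have hnew : s(w, p) ∉ Sym2.map Subtype.val '' T.edgeSet := by
    rintro ⟨e, -, he⟩
    obtain ⟨a, -, ha⟩ := Sym2.mem_map.1 (he ▸ Sym2.mem_mk_left w p)
    exact a.2 ha
  rw [Nat.card_coe_set_eq, hedges, Set.ncard_insert_of_notMem hnew,
    Set.ncard_image_of_injective _ (Sym2.map.injective Subtype.val_injective),
    ← Nat.card_coe_set_eq, hT.2, Set.card_compl_singleton_add_one]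

theorem exists_chordless_path {x y : V} {R : Set V}
    (hne : x ≠ y) (hxy : ¬ G.Adj x y)
    (hreach : (G.induce (insert x (insert y R))).spanningCoe.Reachable x y) :
    ∃ k, ∃ g : ℕ → V, 2 ≤ k ∧ g 0 = x ∧ g k = y ∧ (∀ i, 0 < i → i < k → g i ∈ R) ∧
      ∀ i j, i < j → j ≤ k → g i ≠ g j ∧ (G.Adj (g i) (g j) ↔ j = i + 1) := by
  obtain ⟨p, hp⟩ := hreach.exists_walk_length_eq_dist
  have hmem : ∀ i ≤ p.length, p.getVert i ∈ insert x (insert y R) := fun i hi => by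
    rcases hi.lt_or_eq with hi | rfl
    · exact (spanningCoe_induce_adj.1 (p.adj_getVert_succ hi)).2.1
    · simp [p.getVert_length]
  refine ⟨p.length, p.getVert, ?_, p.getVert_zero, p.getVert_length, fun i h0 hi => ?_,
    fun i j hij hj => ⟨p.getVert_ne_of_length_eq_dist hp hij hj, ?_⟩⟩
  · have h0 : p.length ≠ 0 := fun h => hne (p.eq_of_length_eq_zero h)
    have h1 : p.length ≠ 1 := fun h => hxy (spanningCoe_induce_adj.1 (p.adj_of_length_eq_one h)).1
    omega
  · have hx := p.getVert_zero ▸ (p.getVert_ne_of_length_eq_dist hp h0 hi.le).symm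
    have hy := p.getVert_length ▸ p.getVert_ne_of_length_eq_dist hp hi le_rfl
    simpa [hx, hy] using hmem i hi.le
  · rw [← p.adj_getVert_iff_of_length_eq_dist hp hij hj, spanningCoe_induce_adj]
    simp [hmem i (by omega), hmem j hj]

end SimpleGraph

section Chordal

variable {V V' : Type u} {G : SimpleGraph V} {G' : SimpleGraph V'}

theorem HasLongInducedCycle.map (f : G ↪g G') :
    HasLongInducedCycle G → HasLongInducedCycle G' := by
  rintro ⟨n, hn, c, hc, hadj⟩
  exact ⟨n, hn, f ∘ c, f.injective.comp hc, fun i j => f.map_adj_iff.trans (hadj i j)⟩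

theorem Chordal.embedding (f : G ↪g G') (h : Chordal G') : Chordal G :=
  fun hG => h (hG.map f)

theorem hasLongInducedCycle_of_nat {n : ℕ} (hn : 4 ≤ n) (f : ℕ → V) (hf : Set.InjOn f (Set.Iio n))
    (hadj : ∀ s t, s < t → t < n → (G.Adj (f s) (f t) ↔ t = s + 1 ∨ (s = 0 ∧ t = n - 1))) :
    HasLongInducedCycle G := by
  have : NeZero n := ⟨by omega⟩
  have hsucc : ∀ i j : ZMod n, j = i + 1 ↔ j.val = if i.val + 1 = n then 0 else i.val + 1 :=
    fun i j => by
      rw [← (ZMod.val_injective n).eq_iff, ZMod.val_add, ZMod.val_one_eq_one_mod,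
        Nat.mod_eq_of_lt (show 1 < n by omega)]
      have := ZMod.val_lt i
      split_ifs with h
      · rw [h, Nat.mod_self]
      · rw [Nat.mod_eq_of_lt (by omega)]
  refine ⟨n, hn, fun i => f i.val, fun i j h => ZMod.val_injective n
    (hf (ZMod.val_lt i) (ZMod.val_lt j) h), fun i j => ?_⟩
  have hi := ZMod.val_lt i
  have hj := ZMod.val_lt j
  rw [hsucc, hsucc]
  rcases Nat.lt_trichotomy i.val j.val with h | h | h
  · rw [hadj _ _ h hj]
    split_ifs <;> omega
  · simp only [h, G.irrefl, false_iff]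
    split_ifs <;> omega
  · rw [G.adj_comm, hadj _ _ h hi]
    split_ifs <;> omega

theorem hasLongInducedCycle_of_reachable {a x y : V} {R : Set V} (hne : x ≠ y)
    (hxy : ¬ G.Adj x y) (hax : G.Adj a x) (hay : G.Adj a y) (hR : ∀ r ∈ R, r ≠ a ∧ ¬ G.Adj a r)
    (hreach : (G.induce (insert x (insert y R))).spanningCoe.Reachable x y) :
    HasLongInducedCycle G := by
  obtain ⟨k, g, hk, hg0, hgk, hgR, hg⟩ := exists_chordless_path hne hxy hreach
  have hapex : ∀ i ≤ k, g i ≠ a ∧ (G.Adj a (g i) ↔ i = 0 ∨ i = k) := fun i hi => by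
    rcases Nat.eq_zero_or_pos i with rfl | h0
    · simpa [hg0] using ⟨hax.ne', hax⟩
    rcases hi.lt_or_eq with hi | rfl
    · simpa [h0.ne', hi.ne] using hR _ (hgR i h0 hi)
    · simpa [hgk] using ⟨hay.ne', hay⟩
  refine hasLongInducedCycle_of_nat (n := k + 2) (by omega) (fun | 0 => a | i + 1 => g i) ?_ ?_
  · rintro (_ | s) hs (_ | t) ht h
    · rfl
    · exact absurd h.symm (hapex t (by simp at ht; omega)).1
    · exact absurd h (hapex s (by simp at hs; omega)).1
    · simp only [Set.mem_Iio] at h hs ht ⊢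
      rcases Nat.lt_trichotomy s t with hst | rfl | hst
      · exact absurd h (hg s t hst (by omega)).1
      · rfl
      · exact absurd h.symm (hg t s hst (by omega)).1
  · rintro (_ | s) (_ | t) hst ht
    · omega
    · simp only
      rw [(hapex t (by omega)).2, true_and]
      omega
    · omega
    · simp only
      rw [(hg s t (by omega) (by omega)).2]
      omega

theorem Chordal.isClique_separator (hG : Chordal G) {a : V} {R C : Set V}
    (hR : ∀ r ∈ R, r ≠ a ∧ ¬ G.Adj a r) (hCR : C ⊆ R)
    (hC : ∀ c₁ ∈ C, ∀ c₂ ∈ C, (G.induce R).spanningCoe.Reachable c₁ c₂) :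
    G.IsClique {x | G.Adj a x ∧ ∃ c ∈ C, G.Adj x c} := by
  intro x hx y hy hxy
  obtain ⟨hax, c₁, hc₁, hxc₁⟩ := hx
  obtain ⟨hay, c₂, hc₂, hyc₂⟩ := hy
  by_contra hnxy
  refine hG (hasLongInducedCycle_of_reachable hxy hnxy hax hay hR ?_)
  have hx : (G.induce (insert x (insert y R))).spanningCoe.Reachable x c₁ :=
    Adj.reachable (spanningCoe_induce_adj.2 ⟨hxc₁, by simp, by simp [hCR hc₁]⟩)
  have hy : (G.induce (insert x (insert y R))).spanningCoe.Reachable c₂ y :=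
    Adj.reachable (spanningCoe_induce_adj.2 ⟨hyc₂.symm, by simp [hCR hc₂], by simp⟩)
  exact hx.trans (((hC c₁ hc₁ c₂ hc₂).mono (spanningCoe_induce_mono (by grind))).trans hy)

theorem Chordal.exists_cliqueSeparation (hG : Chordal G)
    {A : Set V} (hA : ¬ G.IsClique A) :
    ∃ S C D : Set V, G.IsClique S ∧ C ∪ S ⊆ A ∧ D ∪ S ⊆ A ∧ (C \ S).Nonempty ∧ (D \ S).Nonempty ∧
      (∀ c ∈ C, A ∩ G.neighborSet c ⊆ C ∪ S) ∧ (∀ d ∈ D, A ∩ G.neighborSet d ⊆ D ∪ S) ∧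
      ∀ c ∈ C, ∀ d ∈ D, c ≠ d ∧ ¬ G.Adj c d := by
  obtain ⟨a, haA, b, hbA, hab, hnab⟩ : ∃ a ∈ A, ∃ b ∈ A, a ≠ b ∧ ¬ G.Adj a b := by
    simpa [IsClique, Set.Pairwise] using hA
  set R := A \ insert a (G.neighborSet a)
  set C := {v | (G.induce R).spanningCoe.Reachable b v}
  set S := {x ∈ A | x ∉ C ∧ ∃ c ∈ C, G.Adj x c}
  set D := A \ (C ∪ S)
  have hR : ∀ r ∈ R, r ≠ a ∧ ¬ G.Adj a r := fun r hr => by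
    simpa [R, not_or] using hr.2
  have hbR : b ∈ R := Set.mem_sdiff_of_mem hbA (by simpa [hab.symm] using hnab)
  have hCR : C ⊆ R := fun v hv => hv.mem_of_spanningCoe_induce hbR
  have hbC : b ∈ C := Reachable.refl b
  have hC : ∀ c ∈ C, ∀ z ∈ A, G.Adj c z → z ∈ C ∪ S := fun c hc z hz hcz => by
    by_cases hzC : z ∈ C
    · exact Or.inl hzC
    · exact Or.inr ⟨hz, hzC, c, hc, hcz.symm⟩
  have hSa : ∀ x ∈ S, G.Adj a x := by
    rintro x ⟨hxA, hxC, c, hc, hxc⟩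
    have hxR : x ∉ R := fun hxR => hxC (Reachable.trans hc
      (Adj.reachable (spanningCoe_induce_adj.2 ⟨hxc.symm, hCR hc, hxR⟩)))
    have hxa : x ≠ a := fun h => (hR c (hCR hc)).2 (h ▸ hxc)
    simpa [R, hxA, hxa] using hxR
  have hS : G.IsClique S :=
    (hG.isClique_separator hR hCR fun c₁ h₁ c₂ h₂ => h₁.symm.trans h₂).subset
      fun x hx => show G.Adj a x ∧ _ from ⟨hSa x hx, hx.2.2⟩
  have haD : a ∈ D := ⟨haA, fun h => h.elim (fun haC => (hR a (hCR haC)).1 rfl)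
    fun haS => G.irrefl (hSa a haS)⟩
  have hD : ∀ d ∈ D, ∀ z ∈ A, G.Adj d z → z ∈ D ∪ S := by
    rintro d ⟨hdA, hdCS⟩ z hz hdz
    have hzC : z ∉ C := fun hzC => hdCS (hC z hzC d hdA hdz.symm)
    by_cases hzS : z ∈ S
    · exact Or.inr hzS
    · exact Or.inl ⟨hz, by simp [hzC, hzS]⟩
  refine ⟨S, C, D, hS, Set.union_subset (fun v hv => (hCR hv).1) fun x hx => hx.1,
    Set.union_subset Set.sdiff_subset fun x hx => hx.1, ⟨b, hbC, fun h => h.2.1 hbC⟩,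
    ⟨a, haD, fun h => haD.2 (Or.inr h)⟩, fun c hc z hz => hC c hc z hz.1 hz.2,
    fun d hd z hz => hD d hd z hz.1 hz.2, fun c hc d hd => ⟨?_, fun h => hd.2 (hC c hc d hd.1 h)⟩⟩
  rintro rfl
  exact hd.2 (Or.inl hc)

/-- Dirac's lemma, strengthened for the induction: a simplicial vertex avoiding a given clique. -/
theorem Chordal.exists_notMem_isClique_inter_neighborSet [Finite V] (hG : Chordal G)
    (A : Set V) {K : Set V} (hK : G.IsClique K) (hAK : ¬ A ⊆ K) :
    ∃ v ∈ A, v ∉ K ∧ G.IsClique (A ∩ G.neighborSet v) := by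
  induction hn : A.ncard using Nat.strong_induction_on generalizing A K with
  | _ n ih =>
  by_cases hA : G.IsClique A
  · obtain ⟨v, hvA, hvK⟩ := Set.not_subset.1 hAK
    exact ⟨v, hvA, hvK, hA.subset Set.inter_subset_left⟩
  obtain ⟨S, C, D, hS, hCA, hDA, ⟨c₀, hc₀C, hc₀S⟩, ⟨d₀, hd₀D, hd₀S⟩, hCN, hDN, hCD⟩ :=
    hG.exists_cliqueSeparation hA
  -- the clique `S` plays the role of `K` in the smaller instance
  have side : ∀ X : Set V, X ∪ S ⊆ A → (∀ x ∈ X, x ∉ K) → ∀ x₀ ∈ X, x₀ ∉ S →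
      ∀ y ∈ A, y ∉ X ∪ S → (∀ x ∈ X, A ∩ G.neighborSet x ⊆ X ∪ S) →
      ∃ v ∈ A, v ∉ K ∧ G.IsClique (A ∩ G.neighborSet v) := by
    intro X hXA hXK x₀ hx₀ hx₀S y hyA hyXS hXN
    have hlt : (X ∪ S).ncard < n :=
      hn ▸ Set.ncard_lt_ncard ((Set.ssubset_iff_of_subset hXA).2 ⟨y, hyA, hyXS⟩)
    obtain ⟨v, hv, hvS, hcl⟩ := ih _ hlt (X ∪ S) hS (fun h => hx₀S (h (Or.inl hx₀))) rfl
    have hvX : v ∈ X := hv.resolve_right hvS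
    exact ⟨v, hXA hv, hXK v hvX, hcl.subset fun z hz => Set.mem_inter (hXN v hvX hz) hz.2⟩
  by_cases hKC : ∃ k ∈ K, k ∈ C
  · obtain ⟨k, hkK, hkC⟩ := hKC
    refine side D hDA (fun d hd hdK => (hCD k hkC d hd).2 (hK hkK hdK (hCD k hkC d hd).1))
      d₀ hd₀D hd₀S c₀ (hCA (Or.inl hc₀C)) ?_ hDN
    rintro (h | h)
    exacts [(hCD c₀ hc₀C c₀ h).1 rfl, hc₀S h]
  · push Not at hKC
    refine side C hCA (fun c hc hcK => hKC c hcK hc) c₀ hc₀C hc₀S d₀ (hDA (Or.inl hd₀D)) ?_ hCN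
    rintro (h | h)
    exacts [(hCD d₀ h d₀ hd₀D).1 rfl, hd₀S h]

theorem Chordal.exists_isClique_neighborSet [Finite V] [Nonempty V] (hG : Chordal G) :
    ∃ v, G.IsClique (G.neighborSet v) := by
  obtain ⟨v, -, -, hv⟩ := hG.exists_notMem_isClique_inter_neighborSet Set.univ
    (K := ∅) (by simp) (by simp)
  exact ⟨v, by simpa using hv⟩

end Chordal

section Family

variable {W : Type u} {F : Set (Set W)}

theorem ChordalProp.comap {W' : Type u} {F' : Set (Set W')} (h : ChordalProp F) (f : F' → F)
    (hf : Function.Injective f)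
    (hinter : ∀ S T : F', ((f S : Set W) ∩ f T).Nonempty ↔ ((S : Set W') ∩ T).Nonempty) :
    ChordalProp F' :=
  Chordal.embedding ⟨⟨f, hf⟩, fun {S T} => and_congr hf.ne_iff (hinter S T)⟩ h

theorem FiniteHelly.exists_forall_mem (h : FiniteHelly F) {𝒮 : Set (Set W)} (hfin : 𝒮.Finite)
    (hne : 𝒮.Nonempty) (hsub : 𝒮 ⊆ F) (hpair : 𝒮.Pairwise fun S T => (S ∩ T).Nonempty) :
    ∃ x, ∀ S ∈ 𝒮, x ∈ S := by
  obtain ⟨x, hx⟩ := h hfin.toFinset (by simpa using hne) (by simpa using hsub)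
    (by simpa using fun S hS T hT => hpair hS hT)
  exact ⟨x, fun S hS => Set.mem_iInter₂.1 hx S (by simpa using hS)⟩

theorem FiniteHelly.nonempty (h : FiniteHelly F) {S : Set W} (hS : S ∈ F) : S.Nonempty := by
  obtain ⟨x, hx⟩ := h.exists_forall_mem (Set.finite_singleton S) (Set.singleton_nonempty S)
    (by simpa using hS) (by simp)
  exact ⟨x, hx S rfl⟩

def IsLeafAt (F : Set (Set W)) (w p : W) : Prop :=
  p ≠ w ∧ ∀ S ∈ F, w ∈ S → ({w}ᶜ ↓∩ S).Nonempty → p ∈ S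

def deletePoint (F : Set (Set W)) (w : W) : Set (Set ({w}ᶜ : Set W)) :=
  {S' | S'.Nonempty ∧ ∃ S ∈ F, {w}ᶜ ↓∩ S = S'}

theorem exists_isLeafAt [Finite W] [Nontrivial W] (hch : ChordalProp F) (hH : FiniteHelly F) :
    ∃ w p, IsLeafAt F w p := by
  by_cases hF : ∃ S ∈ F, S.Nontrivial
  swap
  · obtain ⟨w, p, hwp⟩ := exists_pair_ne W
    refine ⟨w, p, hwp.symm, fun S hS hwS ⟨x, hx⟩ => absurd ⟨S, hS, ?_⟩ hF⟩
    exact ⟨w, hwS, x, hx, fun h => x.2 h.symm⟩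
  set F₂ : Set (Set W) := {S | S ∈ F ∧ S.Nontrivial}
  have : Nonempty F₂ := by obtain ⟨S, hS⟩ := hF; exact ⟨⟨S, hS⟩⟩
  have hF₂F : F₂ ⊆ F := fun S hS => hS.1
  obtain ⟨S₀, hS₀⟩ := (hch.comap (Set.inclusion hF₂F) (Set.inclusion_injective hF₂F)
    fun _ _ => Iff.rfl).exists_isClique_neighborSet
  set 𝒩 : Set (Set W) := {S | S ∈ F₂ ∧ (S ∩ S₀).Nonempty}
  have hpair : 𝒩.Pairwise fun S T => (S ∩ T).Nonempty := by
    rintro S ⟨hSF, hS⟩ T ⟨hTF, hT⟩ hST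
    by_cases hS₀S : (S₀ : Set W) = S
    · exact hS₀S ▸ hT.mono (by simp [Set.inter_comm])
    by_cases hS₀T : (S₀ : Set W) = T
    · exact hS₀T ▸ hS
    refine (hS₀ (x := ⟨S, hSF⟩) (y := ⟨T, hTF⟩) ?_ ?_ fun h => hST (congrArg Subtype.val h)).2
    · exact ⟨fun h => hS₀S (congrArg Subtype.val h), by rwa [Set.inter_comm]⟩
    · exact ⟨fun h => hS₀T (congrArg Subtype.val h), by rwa [Set.inter_comm]⟩
  obtain ⟨p, hp⟩ := hH.exists_forall_mem (Set.toFinite 𝒩)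
    ⟨S₀, S₀.2, by simpa using S₀.2.2.nonempty⟩ (fun S hS => hS.1.1) hpair
  obtain ⟨w, hwS₀, hwp⟩ := S₀.2.2.exists_ne p
  refine ⟨w, p, hwp.symm, fun S hS hwS ⟨x, hx⟩ => hp S ⟨⟨hS, ?_⟩, w, hwS, hwS₀⟩⟩
  exact ⟨w, hwS, x, hx, fun h => x.2 h.symm⟩

variable {w p : W}

theorem IsLeafAt.exists_forall_mem (h : IsLeafAt F w p) (x : W) :
    ∃ y : ({w}ᶜ : Set W), ∀ S ∈ F, ({w}ᶜ ↓∩ S).Nonempty → x ∈ S → y ∈ {w}ᶜ ↓∩ S := by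
  by_cases hx : x = w
  · exact ⟨⟨p, h.1⟩, fun S hS hS' hxS => h.2 S hS (hx ▸ hxS) hS'⟩
  · exact ⟨⟨x, hx⟩, fun _ _ _ hxS => hxS⟩

theorem IsLeafAt.inter_nonempty_iff (h : IsLeafAt F w p) {S T : Set W} (hS : S ∈ F) (hT : T ∈ F)
    (hS' : ({w}ᶜ ↓∩ S).Nonempty) (hT' : ({w}ᶜ ↓∩ T).Nonempty) :
    (S ∩ T).Nonempty ↔ (({w}ᶜ ↓∩ S) ∩ ({w}ᶜ ↓∩ T)).Nonempty := by
  refine ⟨fun ⟨x, hxS, hxT⟩ => ?_, fun ⟨x, hx⟩ => ⟨x, hx⟩⟩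
  obtain ⟨y, hy⟩ := h.exists_forall_mem x
  exact ⟨y, hy S hS hS' hxS, hy T hT hT' hxT⟩

theorem exists_lift_deletePoint (F : Set (Set W)) (w : W) :
    ∃ L : Set ({w}ᶜ : Set W) → Set W,
      ∀ S' ∈ deletePoint F w, L S' ∈ F ∧ {w}ᶜ ↓∩ L S' = S' := by
  choose! L hL using fun S' (hS' : S' ∈ deletePoint F w) => hS'.2
  exact ⟨L, hL⟩

theorem IsLeafAt.chordalProp_deletePoint (h : IsLeafAt F w p) (hch : ChordalProp F) :
    ChordalProp (deletePoint F w) := by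
  obtain ⟨L, hL⟩ := exists_lift_deletePoint F w
  have hLne : ∀ S' ∈ deletePoint F w, ({w}ᶜ ↓∩ L S').Nonempty := fun S' hS' => by
    rw [(hL S' hS').2]
    exact hS'.1
  refine hch.comap (fun S' => ⟨L S', (hL S' S'.2).1⟩) (fun S' T' hST => Subtype.ext ?_)
    fun S' T' => ?_
  · rw [← (hL S' S'.2).2, ← (hL T' T'.2).2]
    exact congrArg _ (congrArg Subtype.val hST)
  · refine (h.inter_nonempty_iff (hL S' S'.2).1 (hL T' T'.2).1 (hLne S' S'.2)
      (hLne T' T'.2)).trans ?_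
    rw [(hL S' S'.2).2, (hL T' T'.2).2]

theorem IsLeafAt.finiteHelly_deletePoint (h : IsLeafAt F w p) (hH : FiniteHelly F) :
    FiniteHelly (deletePoint F w) := by
  intro R' hR' hR'F hpair
  obtain ⟨L, hL⟩ := exists_lift_deletePoint F w
  have hL' : ∀ S' ∈ R', L S' ∈ F ∧ {w}ᶜ ↓∩ L S' = S' := fun S' hS' => hL S' (hR'F hS')
  have hsub : L '' R' ⊆ F := by
    rintro _ ⟨S', hS', rfl⟩
    exact (hL' S' hS').1
  have hpair' : (L '' R').Pairwise fun S T => (S ∩ T).Nonempty := by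
    rintro _ ⟨S', hS', rfl⟩ _ ⟨T', hT', rfl⟩ hST
    obtain ⟨y, hy⟩ := hpair S' hS' T' hT' fun h => hST (h ▸ rfl)
    rw [← (hL' S' hS').2, ← (hL' T' hT').2] at hy
    exact ⟨y, hy⟩
  obtain ⟨x, hx⟩ := hH.exists_forall_mem (R'.finite_toSet.image L)
    ((Finset.coe_nonempty.2 hR').image L) hsub hpair'
  obtain ⟨y, hy⟩ := h.exists_forall_mem x
  refine ⟨y, Set.mem_iInter₂.2 fun S' hS' => ?_⟩
  have hne : ({w}ᶜ ↓∩ L S').Nonempty := by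
    rw [(hL' S' hS').2]
    exact (hR'F hS').1
  exact (hL' S' hS').2 ▸ hy _ (hL' S' hS').1 hne (hx _ ⟨S', hS', rfl⟩)

theorem IsLeafAt.connected_induce (h : IsLeafAt F w p)
    {T : SimpleGraph ({w}ᶜ : Set W)} (hT : ∀ S' ∈ deletePoint F w, (T.induce S').Connected)
    {S : Set W} (hS : S ∈ F) (hSne : S.Nonempty) :
    ((T.spanningCoe ⊔ edge w p).induce S).Connected := by
  have : Nonempty S := hSne.to_subtype
  by_cases hS' : ({w}ᶜ ↓∩ S).Nonempty
  swap
  · have hSw : S ⊆ {w} := fun x hx => by_contra fun hxw => hS' ⟨⟨x, hxw⟩, hx⟩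
    have := (Set.subsingleton_singleton.anti hSw).coe_sort
    exact Connected.of_subsingleton
  have hdel : ((T.spanningCoe ⊔ edge w p).induce (S \ {w})).Connected := by
    let φ : T.induce ({w}ᶜ ↓∩ S) →g (T.spanningCoe ⊔ edge w p).induce (S \ {w}) :=
      ⟨fun x => ⟨x.1.1, x.2, x.1.2⟩,
        fun hxy => Or.inl ((Embedding.spanningCoe T).map_adj_iff.2 hxy)⟩
    refine (hT _ ⟨hS', S, hS, rfl⟩).map φ ?_
    rintro ⟨x, hxS, hxw⟩
    exact ⟨⟨⟨x, hxw⟩, hxS⟩, rfl⟩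
  by_cases hwS : w ∈ S
  · have hpS := h.2 S hS hwS hS'
    have hwp : (T.spanningCoe ⊔ edge w p).Adj w p := Or.inr (by simp [edge_adj, h.1.symm])
    have hSeq : (S \ {w}) ∪ {w, p} = S := by
      ext x
      simp only [Set.mem_union, Set.mem_sdiff, Set.mem_singleton_iff, Set.mem_insert_iff]
      grind
    rw [← hSeq]
    exact induce_union_connected hdel.preconnected (induce_pair_connected_of_adj hwp).preconnected
      ⟨p, ⟨hpS, h.1⟩, by simp⟩
  · rwa [Set.sdiff_singleton_eq_self hwS] at hdel

end Family

/-- Finite case: a family of subsets of a finite set with the chordal property and the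
finite Helly property is the family of vertex sets of subtrees of some tree on `W`. -/
theorem stmt4 {W : Type u} [Finite W] [Nonempty W] (F : Set (Set W))
    (hchordal : ChordalProp F) (hhelly : FiniteHelly F) :
    ∃ T : SimpleGraph W, T.IsTree ∧ ∀ S ∈ F, (T.induce S).Connected := by
  induction hn : Nat.card W generalizing W with
  | zero => exact absurd hn Nat.card_pos.ne'
  | succ n ih =>
    rcases subsingleton_or_nontrivial W with hW | hW
    · refine ⟨⊥, .of_subsingleton, fun S hS => ?_⟩
      have := (hhelly.nonempty hS).to_subtype
      exact Connected.of_subsingleton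
    obtain ⟨w, p, hleaf⟩ := exists_isLeafAt hchordal hhelly
    have : Nonempty ({w}ᶜ : Set W) := ⟨⟨p, hleaf.1⟩⟩
    obtain ⟨T, hT, hTF⟩ := ih (deletePoint F w) (hleaf.chordalProp_deletePoint hchordal)
      (hleaf.finiteHelly_deletePoint hhelly)
      (by have := Set.card_compl_singleton_add_one w; omega)
    exact ⟨_, hT.spanningCoe_sup_edge hleaf.1,
      fun S hS => hleaf.connected_induce hTF hS (hhelly.nonempty hS)⟩
end

section
/- Let F be a family of subsets of a set W such that no element of W belongs to infinitely many infinite members of F. Then F is well-founded: there is no sequence (S_i : i ≥ 1) of members of F such that S₁ ∩ S₂ ∩ ⋯ ≠ ∅ and S₁ ∩ ⋯ ∩ S_i ⊄ S_{i+1} for each i ≥ 1. -/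
open Set

universe u

/-! If `x` lies in every `Sᵢ`, the partial intersections `S₀ ∩ ⋯ ∩ Sᵢ` form a strictly
decreasing chain, so each of them is infinite (a finite set has only finitely many subsets),
and hence so is every `Sᵢ`. The `Sᵢ` are pairwise distinct, since `Sᵢ = Sₖ₊₁` with `i ≤ k` would
put `S₀ ∩ ⋯ ∩ Sₖ` inside `Sₖ₊₁`. Thus `x` lies in infinitely many infinite members of `F`. -/

theorem Set.infinite_of_strictAnti {α : Type*} {f : ℕ → Set α} (hf : StrictAnti f) (n : ℕ) :
    (f n).Infinite :=
  (infinite_iUnion (hf.injective.comp (add_right_injective n))).mono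
    (iUnion_subset fun m => hf.antitone (Nat.le_add_right n m))

section PartialIntersections

variable {α : Type*} {S : ℕ → Set α}

theorem Set.strictAnti_biInter_le_of_not_subset_succ (hS : ∀ i, ¬ (⋂ j ≤ i, S j) ⊆ S (i + 1)) :
    StrictAnti fun i => ⋂ j ≤ i, S j :=
  strictAnti_nat_of_succ_lt fun i => by
    rw [biInter_le_succ]
    exact inter_ssubset_left_iff.mpr (hS i)

theorem Set.injective_of_not_biInter_le_subset_succ (hS : ∀ i, ¬ (⋂ j ≤ i, S j) ⊆ S (i + 1)) :
    Function.Injective S := by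
  refine .of_lt_imp_ne fun i j hij hSij => ?_
  obtain ⟨k, hik, rfl⟩ : ∃ k, i ≤ k ∧ j = k + 1 := ⟨j - 1, by omega, by omega⟩
  exact hS k (hSij ▸ iInter₂_subset i hik)

theorem Set.infinite_of_not_biInter_le_subset_succ (hS : ∀ i, ¬ (⋂ j ≤ i, S j) ⊆ S (i + 1))
    (i : ℕ) : (S i).Infinite :=
  (infinite_of_strictAnti (strictAnti_biInter_le_of_not_subset_succ hS) i).mono
    (iInter₂_subset (κ := (· ≤ i)) i le_rfl)

end PartialIntersections

/-- If no element of `W` belongs to infinitely many infinite members of `F`,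
then `F` is well-founded. -/
theorem stmt5 {W : Type u} (F : Set (Set W))
    (h : ∀ x : W, {S : Set W | S ∈ F ∧ x ∈ S ∧ S.Infinite}.Finite) :
    WellFoundedFamily F := by
  rintro ⟨S, hSF, ⟨x, hx⟩, hS⟩
  rw [mem_iInter] at hx
  exact (h x).not_infinite <|
    infinite_of_injective_forall_mem (injective_of_not_biInter_le_subset_succ hS) fun i =>
      ⟨hSF i, hx i, infinite_of_not_biInter_le_subset_succ hS i⟩
end

section
/- Let F be a family of subsets of W with the chordal property and the finite Helly property, and let T be a tree with vertex set W all of whose edges {u,v} satisfy {u,v} ∈ F. Then every member S of F induces a connected subgraph of T. -/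
open Set

universe u

/-! The path in `T` between two points of `S ∈ F` cannot leave `S`: otherwise take a stretch
`w 0, …, w b` of it whose endpoints lie in `S` and whose interior avoids `S`. If `b = 2`, the sets
`S`, `{w 0, w 1}`, `{w 1, w 2}` meet pairwise but have no common point, against Helly; if `b ≥ 3`,
the sets `{w 0, w 1}, …, {w (b-1), w b}, S` form an induced cycle of length `b + 1 ≥ 4` in the
intersection graph, against chordality. -/

variable {W : Type u} {F : Set (Set W)}

namespace FiniteHelly

theorem nonempty_of_mem (hF : FiniteHelly F) {S : Set W} (hS : S ∈ F) : S.Nonempty := by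
  classical
  simpa using hF {S} (by simp) (by simpa using hS) (by simp)

theorem inter_inter_nonempty (hF : FiniteHelly F) {A B C : Set W}
    (hA : A ∈ F) (hB : B ∈ F) (hC : C ∈ F)
    (hAB : (A ∩ B).Nonempty) (hAC : (A ∩ C).Nonempty) (hBC : (B ∩ C).Nonempty) :
    (A ∩ B ∩ C).Nonempty := by
  classical
  have hpair : ∀ X ∈ ({A, B, C} : Finset (Set W)), ∀ Y ∈ ({A, B, C} : Finset (Set W)),
      X ≠ Y → (X ∩ Y).Nonempty := by
    simp only [Finset.mem_insert, Finset.mem_singleton]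
    rintro X (rfl | rfl | rfl) Y (rfl | rfl | rfl) hXY <;>
      first | exact absurd rfl hXY | assumption | (rw [inter_comm]; assumption)
  simpa [inter_assoc] using
    hF {A, B, C} (by simp) (by simp [Set.insert_subset_iff, hA, hB, hC]) hpair

end FiniteHelly

-- `ZMod (m + 1)` unfolds to `Fin (m + 1)`.
theorem hasLongInducedCycle_of_fin {V : Type u} {G : SimpleGraph V} {m : ℕ} (hm : 3 ≤ m)
    (f : Fin (m + 1) → V) (hf : Function.Injective f)
    (hadj : ∀ i j, G.Adj (f i) (f j) ↔ j = i + 1 ∨ i = j + 1) : HasLongInducedCycle G :=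
  ⟨m + 1, by omega, f, hf, hadj⟩

def gapCycle (S : Set W) (w : ℕ → W) (b k : ℕ) : Set W :=
  if k < b then {w k, w (k + 1)} else S

section gapCycle

variable {S : Set W} {w : ℕ → W} {b : ℕ}

theorem exists_eq_of_mem_gapCycle {k : ℕ} (hk : k < b) {z : W} (hz : z ∈ gapCycle S w b k) :
    ∃ i ≤ b, w i = z := by
  rw [gapCycle, if_pos hk] at hz
  rcases hz with rfl | rfl
  exacts [⟨k, hk.le, rfl⟩, ⟨k + 1, hk, rfl⟩]

variable (hw : InjOn w (Iic b)) (h0 : w 0 ∈ S) (hb : w b ∈ S)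
  (hgap : ∀ i, 0 < i → i < b → w i ∉ S)
include hw h0 hb hgap

theorem mem_gapCycle_iff {i k : ℕ} (hi : i ≤ b) (hk : k ≤ b) :
    w i ∈ gapCycle S w b k ↔ (k < b ∧ (i = k ∨ i = k + 1)) ∨ (k = b ∧ (i = 0 ∨ i = b)) := by
  unfold gapCycle
  split_ifs with hkb
  · simp only [mem_insert_iff, mem_singleton_iff,
      hw.eq_iff (mem_Iic.2 hi) (mem_Iic.2 hk), hw.eq_iff (mem_Iic.2 hi) (mem_Iic.2 hkb)]
    omega
  · constructor
    · intro hiS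
      by_contra
      exact hgap i (by omega) (by omega) hiS
    · rintro (h | ⟨-, rfl | rfl⟩)
      exacts [absurd h.1 hkb, h0, hb]

theorem gapCycle_inter_nonempty_iff {k l : ℕ} (hk : k ≤ b) (hl : l ≤ b) :
    (gapCycle S w b k ∩ gapCycle S w b l).Nonempty ↔
      k = l ∨ k + 1 = l ∨ l + 1 = k ∨ (k = 0 ∧ l = b) ∨ (k = b ∧ l = 0) := by
  constructor
  · rintro ⟨z, hzk, hzl⟩
    by_cases hkl : k = b ∧ l = b
    · omega
    obtain ⟨i, hi, rfl⟩ : ∃ i ≤ b, w i = z := by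
      rcases (show k < b ∨ l < b by omega) with h | h
      exacts [exists_eq_of_mem_gapCycle h hzk, exists_eq_of_mem_gapCycle h hzl]
    rw [mem_gapCycle_iff hw h0 hb hgap hi hk] at hzk
    rw [mem_gapCycle_iff hw h0 hb hgap hi hl] at hzl
    omega
  · intro h
    have hi : (if k = b ∧ l = 0 ∨ k = 0 ∧ l = b then 0 else max k l) ≤ b := by split_ifs <;> omega
    refine ⟨w _, (mem_gapCycle_iff hw h0 hb hgap hi hk).2 ?_,
      (mem_gapCycle_iff hw h0 hb hgap hi hl).2 ?_⟩ <;> split_ifs <;> omega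

theorem gapCycle_injOn (hb2 : 2 ≤ b) : InjOn (gapCycle S w b) (Iic b) := by
  intro k hk l hl hkl
  rw [mem_Iic] at hk hl
  have h : ∀ i ≤ b, ((k < b ∧ (i = k ∨ i = k + 1)) ∨ (k = b ∧ (i = 0 ∨ i = b)) ↔
      (l < b ∧ (i = l ∨ i = l + 1)) ∨ (l = b ∧ (i = 0 ∨ i = b))) := fun i hi => by
    rw [← mem_gapCycle_iff hw h0 hb hgap hi hk, ← mem_gapCycle_iff hw h0 hb hgap hi hl, hkl]
  have := h k hk
  have := h (min (k + 1) b) (min_le_right _ _)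
  have := h l hl
  have := h (min (l + 1) b) (min_le_right _ _)
  omega

theorem hasLongInducedCycle_of_gap (hb3 : 3 ≤ b) (hF : ∀ k ≤ b, gapCycle S w b k ∈ F) :
    HasLongInducedCycle (IntGraph F) := by
  have hinj := gapCycle_injOn hw h0 hb hgap (by omega)
  refine hasLongInducedCycle_of_fin hb3 (fun i => ⟨gapCycle S w b i, hF i (Nat.lt_succ_iff.1 i.2)⟩)
    (fun i j hij => Fin.ext (hinj (Nat.lt_succ_iff.1 i.2) (Nat.lt_succ_iff.1 j.2)
      (congrArg Subtype.val hij))) fun i j => ?_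
  show (_ ≠ _ ∧ _) ↔ _
  rw [Ne, Subtype.mk.injEq, hinj.eq_iff (Nat.lt_succ_iff.1 i.2) (Nat.lt_succ_iff.1 j.2),
    gapCycle_inter_nonempty_iff hw h0 hb hgap (Nat.lt_succ_iff.1 i.2) (Nat.lt_succ_iff.1 j.2),
    Fin.ext_iff, Fin.ext_iff, Fin.val_add_one, Fin.val_add_one]
  simp only [Fin.ext_iff, Fin.val_last]
  have := i.2
  have := j.2
  split_ifs <;> omega

end gapCycle

namespace ChordalProp

variable (hchordal : ChordalProp F) (hhelly : FiniteHelly F)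
include hchordal hhelly

theorem gap_le_one {S : Set W} (hS : S ∈ F) {w : ℕ → W} {b : ℕ} (hw : InjOn w (Iic b))
    (hwF : ∀ k < b, {w k, w (k + 1)} ∈ F) (h0 : w 0 ∈ S) (hb : w b ∈ S)
    (hgap : ∀ i, 0 < i → i < b → w i ∉ S) : b ≤ 1 := by
  have hC : ∀ k ≤ b, gapCycle S w b k ∈ F := fun k _ => by
    unfold gapCycle
    split_ifs with hk
    exacts [hwF k hk, hS]
  by_contra! hb1
  rcases (show b = 2 ∨ 3 ≤ b by omega) with rfl | hb3
  · have hinter {k l : ℕ} (hk : k ≤ 2) (hl : l ≤ 2) :=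
      gapCycle_inter_nonempty_iff hw h0 hb hgap hk hl
    obtain ⟨z, ⟨hz0, hz1⟩, hz2⟩ := hhelly.inter_inter_nonempty (hC 0 (by omega)) (hC 1 (by omega))
      (hC 2 le_rfl) ((hinter (k := 0) (l := 1) (by omega) (by omega)).2 (by omega))
      ((hinter (k := 0) (by omega) le_rfl).2 (by omega))
      ((hinter (k := 1) (by omega) le_rfl).2 (by omega))
    obtain ⟨i, hi, rfl⟩ := exists_eq_of_mem_gapCycle (by omega) hz0
    rw [mem_gapCycle_iff hw h0 hb hgap hi (by omega)] at hz0 hz1 hz2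
    omega
  · exact hchordal (hasLongInducedCycle_of_gap hw h0 hb hgap hb3 hC)

theorem mem_of_chain {S : Set W} (hS : S ∈ F) {n : ℕ} {w : ℕ → W} (hw : InjOn w (Iic n))
    (hwF : ∀ k < n, {w k, w (k + 1)} ∈ F) (h0 : w 0 ∈ S) (hn : w n ∈ S) :
    ∀ i ≤ n, w i ∈ S := by
  classical
  induction n generalizing w with
  | zero =>
    intro i hi
    obtain rfl : i = 0 := by omega
    exact h0
  | succ n ih =>
    have hret : ∃ k, 0 < k ∧ w k ∈ S := ⟨n + 1, by omega, hn⟩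
    have hk := Nat.find_spec hret
    have hkn : Nat.find hret ≤ n + 1 := Nat.find_min' hret ⟨by omega, hn⟩
    have h1 : Nat.find hret = 1 := by
      have := hchordal.gap_le_one hhelly hS (hw.mono (Iic_subset_Iic.2 hkn))
        (fun k hk => hwF k (by omega)) h0 hk.2
        (fun i hi0 hik hiS => Nat.find_min hret hik ⟨hi0, hiS⟩)
      omega
    have hshift : InjOn (fun i => w (i + 1)) (Iic n) := fun i hi j hj hij => by
      have := hw (show i + 1 ∈ Iic (n + 1) by simp_all) (show j + 1 ∈ Iic (n + 1) by simp_all) hij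
      omega
    intro i hi
    rcases i with _ | i
    · exact h0
    · exact ih hshift (fun k hk => hwF (k + 1) (by omega)) (by simpa [h1] using hk.2) hn i (by omega)

theorem support_subset_of_isPath {G : SimpleGraph W} (hG : ∀ u v, G.Adj u v → {u, v} ∈ F)
    {S : Set W} (hS : S ∈ F) {x y : W} {p : G.Walk x y} (hp : p.IsPath) (hx : x ∈ S)
    (hy : y ∈ S) : ∀ v ∈ p.support, v ∈ S := by
  intro v hv
  obtain ⟨i, rfl, hi⟩ := p.mem_support_iff_exists_getVert.1 hv
  exact hchordal.mem_of_chain hhelly hS hp.getVert_injOn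
    (fun k hk => hG _ _ (p.adj_getVert_succ hk)) (by simpa using hx) (by simpa using hy) i hi

theorem induce_connected {G : SimpleGraph W} (hG : G.Connected)
    (hGF : ∀ u v, G.Adj u v → {u, v} ∈ F) {S : Set W} (hS : S ∈ F) :
    (G.induce S).Connected := by
  have := (hhelly.nonempty_of_mem hS).to_subtype
  refine ⟨fun ⟨x, hx⟩ ⟨y, hy⟩ => ?_⟩
  obtain ⟨p, hp⟩ := hG.preconnected.exists_isPath x y
  exact ⟨p.induce S (hchordal.support_subset_of_isPath hhelly hGF hS hp hx hy)⟩

end ChordalProp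

/-- If `F` has the chordal and finite Helly properties and `T` is a tree on `W` all of
whose edges are members of `F`, then every member of `F` induces a connected subgraph. -/
theorem stmt9 {W : Type u} (F : Set (Set W))
    (hchordal : ChordalProp F) (hhelly : FiniteHelly F)
    (T : SimpleGraph W) (hT : T.IsTree)
    (hedges : ∀ u v : W, T.Adj u v → ({u, v} : Set W) ∈ F) :
    ∀ S ∈ F, (T.induce S).Connected :=
  fun _ hS => hchordal.induce_connected hhelly hT.connected hedges hS
end

section
/- Let G be a chordal graph such that no countable clique of G can be enumerated as {v_i : i ≥ 1} in such a way that for each i ≥ 1 there is a vertex of G adjacent to all of v₁, ..., v_{i-1} but not to v_i. Then G is the intersection graph of a set of subtrees of a tree. -/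
open Set

universe u

/-!
Zorn's lemma yields a well-order of the vertices in which the earlier neighbours of every vertex
form a clique. One maximises over partial such orders in which, in addition, every component of
the unordered part attaches to a clique; such an order can always be extended by a vertex of that
component dominating the clique. For a finite clique this vertex comes from a shortest path and
chordality; for an infinite one, its absence would produce a forbidden clique enumeration.

Along this order each vertex either joins the node whose bag built so far is exactly its set of
earlier neighbours, or opens a new node, hung below an earlier node whose bag contains those
neighbours. Such a node exists, even when the earlier neighbours have no largest element, again
because otherwise a forbidden clique enumeration appears. The bags are cliques, and the nodes
whose bags contain a given vertex form a subtree.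
-/

section Chordal

variable {V : Type u} {G : SimpleGraph V}

lemma ZMod.eq_add_one_iff_val {n : ℕ} [NeZero n] (hn : 1 < n) (i j : ZMod n) :
    j = i + 1 ↔ j.val = if i.val + 1 = n then 0 else i.val + 1 := by
  have : Fact (1 < n) := ⟨hn⟩
  rw [← (ZMod.val_injective n).eq_iff, ZMod.val_add, ZMod.val_one]
  have := ZMod.val_lt i
  split_ifs with h
  · rw [h, Nat.mod_self]
  · rw [Nat.mod_eq_of_lt (by omega)]

theorem Chordal.not_inducedCycle (hG : Chordal G) {n : ℕ} (hn : 4 ≤ n) {g : ℕ → V}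
    (hinj : ∀ a < n, ∀ b < n, g a = g b → a = b)
    (hadj : ∀ a b, a < b → b < n → (G.Adj (g a) (g b) ↔ b = a + 1 ∨ (a = 0 ∧ b = n - 1))) :
    False := by
  have : NeZero n := ⟨by omega⟩
  have hadj' : ∀ a < n, ∀ b < n, G.Adj (g a) (g b) ↔
      b = a + 1 ∨ a = b + 1 ∨ (a = 0 ∧ b = n - 1) ∨ (b = 0 ∧ a = n - 1) := by
    intro a ha b hb
    rcases lt_trichotomy a b with hab | rfl | hab
    · rw [hadj a b hab hb]; omega
    · simp only [SimpleGraph.irrefl, false_iff]; omega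
    · rw [G.adj_comm, hadj b a hab ha]; omega
  refine hG ⟨n, hn, fun i => g i.val, fun i j hij => ?_, fun i j => ?_⟩
  · exact ZMod.val_injective n (hinj _ (ZMod.val_lt i) _ (ZMod.val_lt j) hij)
  · have hi := ZMod.val_lt i
    have hj := ZMod.val_lt j
    rw [hadj' _ hi _ hj, ZMod.eq_add_one_iff_val (by omega), ZMod.eq_add_one_iff_val (by omega)]
    split_ifs <;> omega

theorem Chordal.eq_zero_of_inducedPath (hG : Chordal G) {m : ℕ} {f : ℕ → V} {x y : V}
    (hinj : ∀ a ≤ m, ∀ b ≤ m, f a = f b → a = b)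
    (hpath : ∀ a b, a < b → b ≤ m → (G.Adj (f a) (f b) ↔ b = a + 1))
    (hxf : ∀ k ≤ m, f k ≠ x) (hyf : ∀ k ≤ m, f k ≠ y) (hxy : G.Adj x y)
    (hx : ∀ k ≤ m, G.Adj x (f k) ↔ k = 0) (hy : ∀ k ≤ m, G.Adj y (f k) ↔ k = m) :
    m = 0 := by
  by_contra hm
  let g : ℕ → V := fun a => if a ≤ m then f a else if a = m + 1 then y else x
  have hg : ∀ a < m + 3, (a ≤ m ∧ g a = f a) ∨ (a = m + 1 ∧ g a = y) ∨ (a = m + 2 ∧ g a = x) := by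
    intro a ha
    by_cases h1 : a ≤ m
    · exact Or.inl ⟨h1, if_pos h1⟩
    by_cases h2 : a = m + 1
    · exact Or.inr (Or.inl ⟨h2, by simp [g, h2]⟩)
    · exact Or.inr (Or.inr ⟨by omega, by simp [g, h1, h2]⟩)
  refine hG.not_inducedCycle (n := m + 3) (g := g) (by omega) (fun a ha b hb hab => ?_) ?_
  · rcases hg a ha with ⟨ha', hga⟩ | ⟨rfl, hga⟩ | ⟨rfl, hga⟩ <;>
    rcases hg b hb with ⟨hb', hgb⟩ | ⟨rfl, hgb⟩ | ⟨rfl, hgb⟩ <;>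
    first
      | rfl
      | rw [hga, hgb] at hab
    · exact hinj a ha' b hb' hab
    all_goals first
      | exact absurd hab (hyf _ ‹_›)
      | exact absurd hab (hxf _ ‹_›)
      | exact absurd hab.symm (hyf _ ‹_›)
      | exact absurd hab.symm (hxf _ ‹_›)
      | exact absurd hab hxy.ne
      | exact absurd hab hxy.ne'
  · intro a b hab hb
    rcases hg a (by omega) with ⟨ha', hga⟩ | ⟨rfl, hga⟩ | ⟨rfl, hga⟩ <;>
    rcases hg b hb with ⟨hb', hgb⟩ | ⟨rfl, hgb⟩ | ⟨rfl, hgb⟩ <;>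
    first
      | omega
      | rw [hga, hgb]
    · rw [hpath a b hab hb']; omega
    · rw [G.adj_comm, hy a ha']; omega
    · rw [G.adj_comm, hx a ha']; omega
    · exact iff_of_true hxy.symm (by omega)

end Chordal

section Reachable

variable {V : Type u} {G : SimpleGraph V}

def ReachableWithin (G : SimpleGraph V) (C : Set V) : V → V → Prop :=
  Relation.ReflTransGen fun p q => G.Adj p q ∧ p ∈ C ∧ q ∈ C

namespace ReachableWithin

variable {C D : Set V} {a b c : V}

lemma mono (hCD : C ⊆ D) (h : ReachableWithin G C a b) : ReachableWithin G D a b :=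
  Relation.ReflTransGen.mono (fun _ _ hpq => ⟨hpq.1, hCD hpq.2.1, hCD hpq.2.2⟩) _ _ h

lemma symm (h : ReachableWithin G C a b) : ReachableWithin G C b a := by
  induction h with
  | refl => exact Relation.ReflTransGen.refl
  | tail _ hpq ih => exact ih.head ⟨hpq.1.symm, hpq.2.2, hpq.2.1⟩

lemma trans (hab : ReachableWithin G C a b) (hbc : ReachableWithin G C b c) :
    ReachableWithin G C a c :=
  Relation.ReflTransGen.trans hab hbc

lemma mem_of_mem (h : ReachableWithin G C a b) (ha : a ∈ C) : b ∈ C := by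
  induction h with
  | refl => exact ha
  | tail _ hpq _ => exact hpq.2.2

lemma of_component (h : ReachableWithin G C a b) :
    ReachableWithin G {x | ReachableWithin G C a x} a b := by
  induction h with
  | refl => exact Relation.ReflTransGen.refl
  | tail hab hpq ih => exact ih.tail ⟨hpq.1, hab, hab.tail hpq⟩

end ReachableWithin

end Reachable

section WalkSeq

variable {V : Type u} {G : SimpleGraph V} {C : Set V}

def IsWalkSeq (G : SimpleGraph V) (C : Set V) (f : ℕ → V) (m : ℕ) : Prop :=
  (∀ k ≤ m, f k ∈ C) ∧ ∀ k < m, G.Adj (f k) (f (k + 1))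

namespace IsWalkSeq

variable {f : ℕ → V} {m : ℕ}

lemma take (hf : IsWalkSeq G C f m) {n : ℕ} (hn : n ≤ m) : IsWalkSeq G C f n :=
  ⟨fun k hk => hf.1 k (hk.trans hn), fun k hk => hf.2 k (by omega)⟩

lemma drop (hf : IsWalkSeq G C f m) {n : ℕ} (hn : n ≤ m) :
    IsWalkSeq G C (fun k => f (k + n)) (m - n) :=
  ⟨fun k hk => hf.1 _ (by omega),
    fun k hk => by simpa only [Nat.add_right_comm] using hf.2 (k + n) (by omega)⟩

lemma shortcut (hf : IsWalkSeq G C f m) {a d : ℕ} (had : a + d + 1 ≤ m)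
    (hchord : G.Adj (f a) (f (a + d + 1))) :
    IsWalkSeq G C (fun k => if k ≤ a then f k else f (k + d)) (m - d) := by
  refine ⟨fun k hk => ?_, fun k hk => ?_⟩
  · dsimp only
    split_ifs
    · exact hf.1 k (by omega)
    · exact hf.1 _ (by omega)
  · rcases lt_trichotomy k a with h | rfl | h
    · simpa [h.le, Nat.succ_le_of_lt h] using hf.2 k (by omega)
    · simpa [Nat.add_right_comm] using hchord
    · simpa [show ¬ k ≤ a by omega, show ¬ k + 1 ≤ a by omega, Nat.add_right_comm]
        using hf.2 (k + d) (by omega)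

end IsWalkSeq

namespace ReachableWithin

variable {a b : V}

lemma exists_walkSeq (h : ReachableWithin G C a b) (ha : a ∈ C) :
    ∃ m f, f 0 = a ∧ f m = b ∧ IsWalkSeq G C f m := by
  induction h with
  | refl => exact ⟨0, fun _ => a, rfl, rfl, fun _ _ => ha, fun _ hk => absurd hk (by omega)⟩
  | @tail b c _ hbc ih =>
    obtain ⟨m, f, h0, hm, hf⟩ := ih
    have hupd : ∀ k ≤ m, Function.update f (m + 1) c k = f k :=
      fun k hk => Function.update_of_ne (by omega) _ _
    refine ⟨m + 1, Function.update f (m + 1) c, by rw [hupd 0 (by omega), h0],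
      Function.update_self .., fun k hk => ?_, fun k hk => ?_⟩
    · rcases Nat.lt_or_ge k (m + 1) with hk' | hk'
      · rw [hupd k (by omega)]; exact hf.1 k (by omega)
      · rw [show k = m + 1 by omega, Function.update_self]; exact hbc.2.2
    · rw [hupd k (by omega)]
      rcases Nat.lt_or_ge k m with hk' | hk'
      · rw [hupd (k + 1) (by omega)]; exact hf.2 k hk'
      · rw [show k = m by omega, Function.update_self, hm]; exact hbc.1

/-- A shortest walk from `A` to `b` inside `C` is such a path. -/
lemma exists_inducedPath {A : Set V} (ha : a ∈ A) (haC : a ∈ C) (h : ReachableWithin G C a b) :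
    ∃ m f, f 0 ∈ A ∧ f m = b ∧ IsWalkSeq G C f m ∧ (∀ k, 0 < k → k ≤ m → f k ∉ A) ∧
      (∀ i ≤ m, ∀ j ≤ m, f i = f j → i = j) ∧
      ∀ i j, i < j → j ≤ m → (G.Adj (f i) (f j) ↔ j = i + 1) := by
  classical
  let P := fun m => ∃ f : ℕ → V, f 0 ∈ A ∧ f m = b ∧ IsWalkSeq G C f m
  have hP : ∃ m, P m := by
    obtain ⟨m, f, h0, hm, hf⟩ := h.exists_walkSeq haC
    exact ⟨m, f, h0 ▸ ha, hm, hf⟩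
  obtain ⟨f, h0, hm, hf⟩ := Nat.find_spec hP
  set m := Nat.find hP
  have hmin : ∀ n < m, ¬ P n := fun n hn => Nat.find_min hP hn
  have hA : ∀ k, 0 < k → k ≤ m → f k ∉ A := fun k hk hkm hfk =>
    hmin (m - k) (by omega)
      ⟨_, by simpa using hfk, by simp [Nat.sub_add_cancel hkm, hm], hf.drop hkm⟩
  have hchord : ∀ i d, 0 < d → i + d + 1 ≤ m → ¬ G.Adj (f i) (f (i + d + 1)) :=
    fun i d hd hid hadj => hmin (m - d) (by omega)
      ⟨_, by simpa using h0,
        by simp [show ¬ m - d ≤ i by omega, Nat.sub_add_cancel (show d ≤ m by omega), hm],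
        hf.shortcut hid hadj⟩
  have hne : ∀ i j, i < j → j ≤ m → f i ≠ f j := by
    intro i j hij hjm heq
    rcases Nat.lt_or_ge j m with hj | hj
    · refine hchord i (j - i) (by omega) (by omega) ?_
      rw [show i + (j - i) + 1 = j + 1 by omega, heq]
      exact hf.2 j hj
    · obtain rfl : j = m := by omega
      exact hmin i hij ⟨f, h0, heq.trans hm, hf.take hij.le⟩
  refine ⟨m, f, h0, hm, hf, hA, fun i hi j hj hij => ?_, fun i j hij hjm => ?_⟩
  · by_contra hne'
    rcases Nat.lt_or_gt_of_ne hne' with h' | h'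
    · exact hne i j h' hj hij
    · exact hne j i h' hi hij.symm
  · refine ⟨fun hadj => ?_, fun hj => hj ▸ hf.2 i (by omega)⟩
    by_contra hj
    refine hchord i (j - i - 1) (by omega) (by omega) ?_
    rwa [show i + (j - i - 1) + 1 = j by omega]

end ReachableWithin

end WalkSeq

section Domination

variable {V : Type u} {G : SimpleGraph V}

theorem Chordal.exists_dominating_of_finset (hG : Chordal G) {C : Set V}
    (hC : ∀ a ∈ C, ∀ b ∈ C, ReachableWithin G C a b) (hCne : C.Nonempty) (F : Finset V)
    (hF : G.IsClique (F : Set V)) (hFC : ∀ a ∈ F, a ∉ C) (hFN : ∀ a ∈ F, ∃ c ∈ C, G.Adj a c) :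
    ∃ v ∈ C, ∀ a ∈ F, G.Adj v a := by
  classical
  induction F using Finset.induction_on with
  | empty => exact ⟨hCne.some, hCne.some_mem, by simp⟩
  | @insert y F hyF ih =>
    simp only [Finset.mem_insert, forall_eq_or_imp, Finset.coe_insert] at hFC hFN hF ⊢
    obtain ⟨v', hv'C, hv'F⟩ := ih (hF.subset (Set.subset_insert _ _)) hFC.2 hFN.2
    obtain ⟨u, huC, hyu⟩ := hFN.1
    -- The first vertex of a shortest path from the neighbourhood of `y` to `v'` dominates: the
    -- first neighbour on it of any other `k ∈ F` would close an induced cycle through `y` and `k`.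
    obtain ⟨m, f, hf0, hfm, hf, hfA, hinj, hpath⟩ :=
      (hC u huC v' hv'C).exists_inducedPath (A := {c | G.Adj y c}) hyu huC
    refine ⟨f 0, hf.1 0 (Nat.zero_le _), hf0.symm, fun k hk => ?_⟩
    have hex : ∃ i, G.Adj k (f i) := ⟨m, hfm ▸ (hv'F k hk).symm⟩
    have hi : Nat.find hex ≤ m := Nat.find_min' hex (hfm ▸ (hv'F k hk).symm)
    have hfC : ∀ j ≤ Nat.find hex, f j ∈ C := fun j hj => hf.1 j (hj.trans hi)
    have hfirst : Nat.find hex = 0 := by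
      refine hG.eq_zero_of_inducedPath (x := y) (y := k)
        (fun a ha b hb => hinj a (ha.trans hi) b (hb.trans hi))
        (fun a b hab hb => hpath a b hab (hb.trans hi))
        (fun j hj hfy => hFC.1 (hfy ▸ hfC j hj)) (fun j hj hfk => hFC.2 k hk (hfk ▸ hfC j hj))
        (hF (Set.mem_insert _ _) (Set.mem_insert_of_mem _ hk) (fun h => hyF (h ▸ hk)))
        (fun j hj => ⟨fun hadj => ?_, fun h => h ▸ hf0⟩)
        (fun j hj => ⟨fun hadj => ?_, fun h => h ▸ Nat.find_spec hex⟩)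
      · by_contra hj0
        exact hfA j (Nat.pos_of_ne_zero hj0) (hj.trans hi) hadj
      · by_contra hj'
        exact Nat.find_min hex (lt_of_le_of_ne hj hj') hadj
    exact (hfirst ▸ Nat.find_spec hex).symm

end Domination

lemma exists_seq_of_forall_finset {α β : Type*} [DecidableEq α] {K : Set α}
    (P : Finset α → α → β → Prop) (h : ∀ s : Finset α, ↑s ⊆ K → ∃ a ∈ K, ∃ b, P s a b) :
    ∃ (a : ℕ → α) (b : ℕ → β), ∀ i, a i ∈ K ∧ P ((Finset.range i).image a) (a i) (b i) := by
  have h' : ∀ s : Finset α, ∃ p : α × β, ↑s ⊆ K → p.1 ∈ K ∧ P s p.1 p.2 := by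
    intro s
    by_cases hs : ↑s ⊆ K
    · obtain ⟨a, ha, b, hab⟩ := h s hs
      exact ⟨(a, b), fun _ => ⟨ha, hab⟩⟩
    · obtain ⟨a, -, b, -⟩ := h ∅ (by simp)
      exact ⟨(a, b), fun h => absurd h hs⟩
  choose p hp using h'
  let pre : ℕ → Finset α := fun n => Nat.rec ∅ (fun _ s => insert (p s).1 s) n
  have hpre : ∀ n, pre n = (Finset.range n).image fun i => (p (pre i)).1 := by
    intro n
    induction n with
    | zero => rfl
    | succ n ih => rw [Finset.range_add_one, Finset.image_insert, ← ih]
  have hK : ∀ n, ∀ a ∈ pre n, a ∈ K := by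
    intro n
    induction n with
    | zero => simp [pre]
    | succ n ih =>
      intro a ha
      rcases Finset.mem_insert.1 ha with rfl | ha
      · exact (hp _ ih).1
      · exact ih a ha
  refine ⟨fun i => (p (pre i)).1, fun i => (p (pre i)).2, fun i => ?_⟩
  rw [← hpre]
  exact hp _ (hK i)

section BadCliqueSeq

variable {V : Type u} {G : SimpleGraph V}

def IsBadCliqueSeq (G : SimpleGraph V) (v : ℕ → V) : Prop :=
  Function.Injective v ∧ (∀ i j : ℕ, i ≠ j → G.Adj (v i) (v j)) ∧
    ∀ i : ℕ, ∃ w : V, w ≠ v i ∧ (∀ j : ℕ, j < i → G.Adj w (v j)) ∧ ¬ G.Adj w (v i)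

lemma isBadCliqueSeq_of_isClique {S : Set V} (hS : G.IsClique S) {v : ℕ → V} (hv : ∀ i, v i ∈ S)
    (hw : ∀ i, ∃ w, w ≠ v i ∧ (∀ j < i, G.Adj w (v j)) ∧ ¬ G.Adj w (v i)) :
    IsBadCliqueSeq G v := by
  have hne : ∀ i j, j < i → v i ≠ v j := fun i j hji heq => by
    obtain ⟨w, -, hwj, hwi⟩ := hw i
    exact hwi (heq ▸ hwj j hji)
  have hinj : Function.Injective v := fun i j hij => by
    by_contra h
    rcases Nat.lt_or_gt_of_ne h with h | h
    · exact hne j i h hij.symm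
    · exact hne i j h hij
  exact ⟨hinj, fun i j hij => hS (hv i) (hv j) (hinj.ne hij), hw⟩

/-- If no vertex of `C` dominated `K`, choosing alternately a vertex of `C` dominating the members
of `K` chosen so far (the finite case) and a member of `K` that it misses would yield a bad clique
sequence. -/
theorem Chordal.exists_dominating (hG : Chordal G) (hbad : ¬ ∃ v, IsBadCliqueSeq G v)
    {C K : Set V} (hC : ∀ a ∈ C, ∀ b ∈ C, ReachableWithin G C a b) (hCne : C.Nonempty)
    (hK : G.IsClique K) (hKC : ∀ a ∈ K, a ∉ C) (hKN : ∀ a ∈ K, ∃ c ∈ C, G.Adj a c) :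
    ∃ v ∈ C, ∀ a ∈ K, G.Adj v a := by
  classical
  by_contra! hnot
  obtain ⟨k, w, hkw⟩ := exists_seq_of_forall_finset (K := K)
    (fun s a w => w ∈ C ∧ (∀ b ∈ s, G.Adj w b) ∧ ¬ G.Adj w a) fun s hs => by
      obtain ⟨w, hwC, hws⟩ := hG.exists_dominating_of_finset hC hCne s (hK.subset hs)
        (fun a ha => hKC a (hs ha)) (fun a ha => hKN a (hs ha))
      obtain ⟨a, haK, hwa⟩ := hnot w hwC
      exact ⟨a, haK, w, hwC, hws, hwa⟩
  refine hbad ⟨k, isBadCliqueSeq_of_isClique hK (fun i => (hkw i).1) fun i => ⟨w i, ?_,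
    fun j hj => (hkw i).2.2.1 _ (Finset.mem_image_of_mem k (Finset.mem_range.2 hj)),
    (hkw i).2.2.2⟩⟩
  exact fun h => hKC _ (hkw i).1 (h ▸ (hkw i).2.1)

end BadCliqueSeq

section EliminationOrder

variable {V : Type u} {G : SimpleGraph V}

/-- A partial well-order on `V`, encoded by its graph: it is reflexive exactly on its domain
`{x | (x, x) ∈ R}`. -/
structure IsPartialWellOrder (R : Set (V × V)) : Prop where
  mem_dom : ∀ p ∈ R, (p.1, p.1) ∈ R ∧ (p.2, p.2) ∈ R
  trans : ∀ x y z, (x, y) ∈ R → (y, z) ∈ R → (x, z) ∈ R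
  antisymm : ∀ x y, (x, y) ∈ R → (y, x) ∈ R → x = y
  total : ∀ x y, (x, x) ∈ R → (y, y) ∈ R → (x, y) ∈ R ∨ (y, x) ∈ R
  exists_min : ∀ S : Set V, (∀ x ∈ S, (x, x) ∈ R) → S.Nonempty →
    ∃ m ∈ S, ∀ x ∈ S, (x, m) ∈ R → x = m

def IsEndExtension (R R' : Set (V × V)) : Prop :=
  R ⊆ R' ∧ ∀ x y, (x, y) ∈ R' → (y, y) ∈ R → (x, y) ∈ R

lemma IsEndExtension.trans {R R' R'' : Set (V × V)} (h : IsEndExtension R R')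
    (h' : IsEndExtension R' R'') : IsEndExtension R R'' :=
  ⟨h.1.trans h'.1, fun x y hxy hy => h.2 x y (h'.2 x y hxy (h.1 hy)) hy⟩

section iUnion

variable {ι : Type*} {R : ι → Set (V × V)}
  (hc : ∀ i j, IsEndExtension (R i) (R j) ∨ IsEndExtension (R j) (R i))
include hc

lemma exists_mem_mem_of_mem_iUnion {p q : V × V} (hp : p ∈ ⋃ i, R i) (hq : q ∈ ⋃ i, R i) :
    ∃ i, p ∈ R i ∧ q ∈ R i := by
  obtain ⟨i, hpi⟩ := Set.mem_iUnion.1 hp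
  obtain ⟨j, hqj⟩ := Set.mem_iUnion.1 hq
  rcases hc i j with hij | hji
  · exact ⟨j, hij.1 hpi, hqj⟩
  · exact ⟨i, hpi, hji.1 hqj⟩

lemma isEndExtension_iUnion (i : ι) : IsEndExtension (R i) (⋃ j, R j) := by
  refine ⟨Set.subset_iUnion R i, fun x y hxy hy => ?_⟩
  obtain ⟨j, hj⟩ := Set.mem_iUnion.1 hxy
  rcases hc i j with hij | hji
  · exact hij.2 x y hj hy
  · exact hji.1 hj

lemma IsPartialWellOrder.iUnion (hR : ∀ i, IsPartialWellOrder (R i)) :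
    IsPartialWellOrder (⋃ i, R i) := by
  have hpair := fun {p q} => exists_mem_mem_of_mem_iUnion hc (p := p) (q := q)
  refine ⟨fun p hp => ?_, fun x y z hxy hyz => ?_, fun x y hxy hyx => ?_, fun x y hx hy => ?_,
    fun S hS hSne => ?_⟩
  · obtain ⟨i, hi⟩ := Set.mem_iUnion.1 hp
    exact ⟨Set.mem_iUnion.2 ⟨i, ((hR i).mem_dom p hi).1⟩,
      Set.mem_iUnion.2 ⟨i, ((hR i).mem_dom p hi).2⟩⟩
  · obtain ⟨i, hxy, hyz⟩ := hpair hxy hyz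
    exact Set.mem_iUnion.2 ⟨i, (hR i).trans x y z hxy hyz⟩
  · obtain ⟨i, hxy, hyx⟩ := hpair hxy hyx
    exact (hR i).antisymm x y hxy hyx
  · obtain ⟨i, hx, hy⟩ := hpair hx hy
    exact ((hR i).total x y hx hy).imp (Set.mem_iUnion_of_mem i) (Set.mem_iUnion_of_mem i)
  · obtain ⟨x₀, hx₀⟩ := hSne
    obtain ⟨i, hx₀i⟩ := Set.mem_iUnion.1 (hS x₀ hx₀)
    obtain ⟨m, ⟨hmS, hmi⟩, hmin⟩ :=
      (hR i).exists_min {x ∈ S | (x, x) ∈ R i} (fun x hx => hx.2) ⟨x₀, hx₀, hx₀i⟩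
    refine ⟨m, hmS, fun x hx hxm => ?_⟩
    have hxm' := (isEndExtension_iUnion hc i).2 x m hxm hmi
    exact hmin x ⟨hx, ((hR i).mem_dom _ hxm').1⟩ hxm'

end iUnion

lemma IsPartialWellOrder.insertTop {R : Set (V × V)} (hR : IsPartialWellOrder R) {v : V}
    (hv : (v, v) ∉ R) : IsPartialWellOrder (R ∪ insert v {x | (x, x) ∈ R} ×ˢ {v}) := by
  have hmem : ∀ x y, (x, y) ∈ R ∪ insert v {x | (x, x) ∈ R} ×ˢ {v} ↔
      (x, y) ∈ R ∨ ((x = v ∨ (x, x) ∈ R) ∧ y = v) := fun x y => by simp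
  have hleft : ∀ x y, (x, y) ∈ R → x ≠ v ∧ y ≠ v := fun x y hxy =>
    ⟨fun h => hv (h ▸ (hR.mem_dom _ hxy).1), fun h => hv (h ▸ (hR.mem_dom _ hxy).2)⟩
  have hdiag : ∀ x, (x, x) ∈ R ∪ insert v {x | (x, x) ∈ R} ×ˢ {v} ↔ x = v ∨ (x, x) ∈ R :=
    fun x => by rw [hmem]; tauto
  refine ⟨fun ⟨x, y⟩ hp => ?_, fun x y z hxy hyz => ?_, fun x y hxy hyx => ?_,
    fun x y hx hy => ?_, fun S hS hSne => ?_⟩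
  · grind [hR.mem_dom (x, y)]
  · grind [hR.trans x y z, hR.mem_dom (x, y), hR.mem_dom (y, z)]
  · grind [hR.antisymm x y]
  · grind [hR.total x y]
  · simp only [hdiag] at hS
    by_cases hS' : (S \ {v}).Nonempty
    · obtain ⟨m, hm, hmin⟩ :=
        hR.exists_min (S \ {v}) (fun x hx => (hS x hx.1).resolve_left hx.2) hS'
      refine ⟨m, hm.1, fun x hx hxm => ?_⟩
      rcases (hmem x m).1 hxm with hxm | ⟨-, rfl⟩
      · exact hmin x ⟨hx, (hleft x m hxm).1⟩ hxm
      · exact absurd rfl hm.2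
    · obtain ⟨x₀, hx₀⟩ := hSne
      have hSv : ∀ x ∈ S, x = v := fun x hx => by_contra fun h => hS' ⟨x, hx, h⟩
      exact ⟨x₀, hx₀, fun x hx _ => (hSv x hx).trans (hSv x₀ hx₀).symm⟩

lemma isEndExtension_insertTop {R : Set (V × V)} {v : V} (hv : (v, v) ∉ R) :
    IsEndExtension R (R ∪ insert v {x | (x, x) ∈ R} ×ˢ {v}) := by
  refine ⟨Set.subset_union_left, fun x y hxy hy => ?_⟩
  rcases hxy with hxy | ⟨-, rfl⟩
  · exact hxy
  · exact absurd hy hv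

/-- The vertices of `S` adjacent to the component of `G - S` containing `c`. -/
def attachment (G : SimpleGraph V) (S : Set V) (c : V) : Set V :=
  {a ∈ S | ∃ c', ReachableWithin G Sᶜ c c' ∧ G.Adj a c'}

lemma attachment_subset_of_reachableWithin {S : Set V} {c d : V}
    (h : ReachableWithin G Sᶜ c d) : attachment G S d ⊆ attachment G S c :=
  fun _ ⟨haS, c', hdc', hac'⟩ => ⟨haS, c', h.trans hdc', hac'⟩

lemma mem_attachment_of_subset {S S' : Set V} (hSS' : S ⊆ S') {a c : V}
    (ha : a ∈ attachment G S' c) (haS : a ∈ S) : a ∈ attachment G S c :=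
  ⟨haS, ha.2.imp fun _ h => ⟨h.1.mono (Set.compl_subset_compl.2 hSS'), h.2⟩⟩

structure IsPartialEliminationOrder (G : SimpleGraph V) (R : Set (V × V)) : Prop
    extends IsPartialWellOrder R where
  isClique_earlier : ∀ x, G.IsClique {u | (u, x) ∈ R ∧ G.Adj x u}
  isClique_attachment : ∀ c, (c, c) ∉ R → G.IsClique (attachment G {x | (x, x) ∈ R} c)

namespace IsPartialEliminationOrder

lemma iUnion {ι : Type*} {R : ι → Set (V × V)} (hR : ∀ i, IsPartialEliminationOrder G (R i))
    (hc : ∀ i j, IsEndExtension (R i) (R j) ∨ IsEndExtension (R j) (R i)) :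
    IsPartialEliminationOrder G (⋃ i, R i) where
  toIsPartialWellOrder := IsPartialWellOrder.iUnion hc fun i => (hR i).toIsPartialWellOrder
  isClique_earlier x u hu w hw huw := by
    obtain ⟨i, hu', hw'⟩ := exists_mem_mem_of_mem_iUnion hc hu.1 hw.1
    exact (hR i).isClique_earlier x ⟨hu', hu.2⟩ ⟨hw', hw.2⟩ huw
  isClique_attachment c hc' a ha b hb hab := by
    obtain ⟨i, ha', hb'⟩ := exists_mem_mem_of_mem_iUnion hc ha.1 hb.1
    have hsub : {x | (x, x) ∈ R i} ⊆ {x | (x, x) ∈ ⋃ j, R j} :=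
      fun x hx => Set.mem_iUnion_of_mem i hx
    exact (hR i).isClique_attachment c (fun h => hc' (hsub h))
      (mem_attachment_of_subset hsub ha ha') (mem_attachment_of_subset hsub hb hb') hab

lemma insertTop {R : Set (V × V)} (hR : IsPartialEliminationOrder G R) {v : V}
    (hv : (v, v) ∉ R) (hdom : ∀ a ∈ attachment G {x | (x, x) ∈ R} v, G.Adj v a) :
    IsPartialEliminationOrder G (R ∪ insert v {x | (x, x) ∈ R} ×ˢ {v}) where
  toIsPartialWellOrder := hR.toIsPartialWellOrder.insertTop hv
  isClique_earlier x := by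
    by_cases hx : x = v
    · subst hx
      refine (hR.isClique_attachment x hv).subset ?_
      rintro u ⟨hu, hxu⟩
      refine ⟨?_, x, .refl, hxu.symm⟩
      rcases hu with hu | ⟨hu | hu, -⟩
      · exact absurd (hR.mem_dom _ hu).2 hv
      · exact absurd hu hxu.ne'
      · exact hu
    · refine (hR.isClique_earlier x).subset ?_
      rintro u ⟨hu, hxu⟩
      refine ⟨?_, hxu⟩
      rcases hu with hu | ⟨-, rfl⟩
      · exact hu
      · exact absurd rfl hx
  isClique_attachment c hc a ha b hb hab := by
    set S := {x | (x, x) ∈ R}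
    have hS : {x | (x, x) ∈ R ∪ insert v S ×ˢ {v}} = insert v S := by
      ext x
      simp only [Set.mem_ofPred_eq, Set.mem_union, Set.mem_prod, Set.mem_insert_iff,
        Set.mem_singleton_iff, S]
      tauto
    rw [hS] at ha hb
    replace hc : c ∉ insert v S := hS ▸ hc
    have hSS : S ⊆ insert v S := Set.subset_insert v S
    have hcS : c ∉ S := fun h => hc (hSS h)
    have key : ∀ b, v ∈ attachment G (insert v S) c → b ∈ attachment G (insert v S) c →
        b ∈ S → G.Adj v b := by
      rintro b ⟨-, c', hcc', hvc'⟩ hb hbS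
      refine hdom b (attachment_subset_of_reachableWithin ?_ (mem_attachment_of_subset hSS hb hbS))
      have hc' : c' ∉ S := fun h => hcc'.mem_of_mem hc (hSS h)
      exact Relation.ReflTransGen.head ⟨hvc', hv, hc'⟩
        (hcc'.symm.mono (Set.compl_subset_compl.2 hSS))
    rcases ha.1 with rfl | haS <;> rcases hb.1 with rfl | hbS
    · exact absurd rfl hab
    · exact key b ha hb hbS
    · exact (key a hb ha haS).symm
    · exact hR.isClique_attachment c hcS (mem_attachment_of_subset hSS ha haS)
        (mem_attachment_of_subset hSS hb hbS) hab

end IsPartialEliminationOrder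

lemma IsPartialWellOrder.isWellOrder {R : Set (V × V)} (hR : IsPartialWellOrder R)
    (hfull : ∀ x, (x, x) ∈ R) : IsWellOrder V fun x y => (x, y) ∈ R ∧ x ≠ y where
  wf := WellFounded.wellFounded_iff_has_min.2 fun S hS => by
    obtain ⟨m, hm, hmin⟩ := hR.exists_min S (fun x _ => hfull x) hS
    exact ⟨m, hm, fun x hx hxm => hxm.2 (hmin x hx hxm.1)⟩
  trichotomous x y hxy hyx := by
    by_contra hne
    rcases hR.total x y (hfull x) (hfull y) with h | h
    · exact hxy ⟨h, hne⟩
    · exact hyx ⟨h, Ne.symm hne⟩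

lemma IsPartialEliminationOrder.exists_dominating (hG : Chordal G)
    (hbad : ¬ ∃ v, IsBadCliqueSeq G v) {R : Set (V × V)} (hR : IsPartialEliminationOrder G R)
    {z : V} (hz : (z, z) ∉ R) :
    ∃ v, (v, v) ∉ R ∧ ∀ a ∈ attachment G {x | (x, x) ∈ R} v, G.Adj v a := by
  set S := {x | (x, x) ∈ R}
  obtain ⟨v, hvC, hv⟩ := hG.exists_dominating hbad (C := {w | ReachableWithin G Sᶜ z w})
    (K := attachment G S z)
    (fun a ha b hb => ha.of_component.symm.trans hb.of_component) ⟨z, .refl⟩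
    (hR.isClique_attachment z hz) (fun a ha haC => haC.mem_of_mem hz ha.1)
    (fun a ⟨_, c', hzc', hac'⟩ => ⟨c', hzc', hac'⟩)
  exact ⟨v, hvC.mem_of_mem hz, fun a ha => hv a (attachment_subset_of_reachableWithin hvC ha)⟩

theorem Chordal.exists_wellOrder_isClique_earlier (hG : Chordal G)
    (hbad : ¬ ∃ v, IsBadCliqueSeq G v) :
    ∃ r : V → V → Prop, IsWellOrder V r ∧ ∀ x, G.IsClique {u | r u x ∧ G.Adj x u} := by
  obtain ⟨M, hM⟩ := exists_maximal_of_chains_bounded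
    (r := fun R R' : {R // IsPartialEliminationOrder G R} => IsEndExtension R.1 R'.1)
    (fun c hc => by
      have hcomp : ∀ R R' : c, IsEndExtension R.1.1 R'.1.1 ∨ IsEndExtension R'.1.1 R.1.1 := by
        rintro ⟨R, hR⟩ ⟨R', hR'⟩
        by_cases h : R = R'
        · subst h
          exact Or.inl ⟨subset_rfl, fun _ _ h _ => h⟩
        · exact hc hR hR' h
      exact ⟨⟨_, .iUnion (fun R : c => R.1.2) hcomp⟩,
        fun R hR => isEndExtension_iUnion hcomp ⟨R, hR⟩⟩)
    (fun h h' => h.trans h')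
  have hfull : ∀ z, (z, z) ∈ M.1 := by
    by_contra! ⟨z, hz⟩
    obtain ⟨v, hv, hdom⟩ := M.2.exists_dominating hG hbad hz
    exact hv ((hM ⟨_, M.2.insertTop hv hdom⟩ (isEndExtension_insertTop hv)).1
      (Or.inr ⟨Set.mem_insert v _, rfl⟩))
  exact ⟨_, M.2.isWellOrder hfull, fun x u hu w hw huw =>
    M.2.isClique_earlier x ⟨hu.1.1, hu.2⟩ ⟨hw.1.1, hw.2⟩ huw⟩

end EliminationOrder

/-- In a cycle, both neighbours of the largest vertex would have to be its parent. -/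
theorem isTree_fromRel_parent {W : Type*} [LinearOrder W] [WellFoundedLT W] (p : W → W) (r : W)
    (hr : p r = r) (hp : ∀ b ≠ r, p b < b) : (SimpleGraph.fromRel fun a b => p a = b).IsTree := by
  set T := SimpleGraph.fromRel fun a b => p a = b
  have hparent : ∀ a b, b < a → T.Adj a b → p a = b := by
    intro a b hba hab
    rcases ((SimpleGraph.fromRel_adj _ _ _).1 hab).2 with h | h
    · exact h
    · by_cases hb : b = r
      · subst hb; exact absurd (h.symm.trans hr) hba.ne'
      · exact absurd (h ▸ hp b hb) (lt_asymm hba)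
  have hreach : ∀ b, T.Reachable b r := fun b => by
    induction b using WellFoundedLT.induction with
    | _ b ih =>
      by_cases hb : b = r
      · exact hb ▸ .refl _
      · exact (SimpleGraph.Adj.reachable ((SimpleGraph.fromRel_adj _ _ _).2
          ⟨(hp b hb).ne', Or.inl rfl⟩)).trans (ih _ (hp b hb))
  have : Nonempty W := ⟨r⟩
  refine ⟨⟨fun a b => (hreach a).trans (hreach b).symm⟩, fun v c hc => ?_⟩
  have hne : c.support.toFinset.Nonempty := ⟨v, by simp⟩
  set m := c.support.toFinset.max' hne
  have hm : m ∈ c.support := List.mem_toFinset.1 (Finset.max'_mem _ _)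
  have hsub : c.toSubgraph.neighborSet m ⊆ {p m} := fun w hw => by
    have hwm : w ≤ m := Finset.le_max' _ _ (List.mem_toFinset.2 (by
      simpa [SimpleGraph.Walk.verts_toSubgraph] using hw.snd_mem))
    exact (hparent m w (lt_of_le_of_ne hwm hw.adj_sub.ne') hw.adj_sub).symm
  have := (hc.ncard_neighborSet_toSubgraph_eq_two hm).symm.trans_le
    ((Set.ncard_le_ncard hsub (Set.finite_singleton _)).trans_eq (Set.ncard_singleton _))
  omega

namespace EliminationTree

variable {V : Type u} [LinearOrder V] (G : SimpleGraph V)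

def earlierNbrs (x : V) : Set V := {y | y < x ∧ G.Adj x y}

variable [WellFoundedLT V]

open Classical in
/-- Vertices are processed in increasing order: `x` joins an existing node `b` if the part of the
bag of `b` built before `x` is exactly the set of earlier neighbours of `x`; otherwise `x` opens
a node of its own. -/
noncomputable def node : V → V :=
  WellFoundedLT.fix fun x node =>
    if h : ∃ b, ∃ hb : b < x, node b hb = b ∧
        ∀ w (hw : w < x), (w = b ∨ w ∈ earlierNbrs G b ∨ node w hw = b) ↔ w ∈ earlierNbrs G x
    then h.choose else x

def bag (b : V) : Set V := {w | w = b ∨ w ∈ earlierNbrs G b ∨ node G w = b}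

def IsCovered (x : V) : Prop :=
  (earlierNbrs G x).Nonempty → ∃ b < x, node G b = b ∧ earlierNbrs G x ⊆ bag G b

def IsAntichainBefore (x : V) : Prop :=
  ∀ b b', node G b = b → node G b' = b' → b < x → b' < x →
    bag G b ∩ Iio x ⊆ bag G b' ∩ Iio x → b = b'

abbrev Node : Type u := {b : V // node G b = b}

/-- The nodes whose bags contain `x`, in the tree with an extra root `⊥`. -/
def subtree (x : V) : Set (WithBot (Node G)) := (↑) '' {c : Node G | x ∈ bag G c}

variable {G}

lemma node_cases (x : V) :
    (node G x = x ∧ ¬ ∃ b < x, node G b = b ∧ bag G b ∩ Iio x = earlierNbrs G x) ∨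
    (node G x < x ∧ node G (node G x) = node G x ∧
      bag G (node G x) ∩ Iio x = earlierNbrs G x) := by
  classical
  have hbag : ∀ b, bag G b ∩ Iio x = earlierNbrs G x ↔
      ∀ w, w < x → (w ∈ bag G b ↔ w ∈ earlierNbrs G x) := fun b => by
    refine ⟨fun h w hw => ?_, fun h => ?_⟩
    · rw [← h]; exact ⟨fun hb => ⟨hb, hw⟩, fun hb => hb.1⟩
    · ext w
      exact ⟨fun hw => (h w hw.2).1 hw.1, fun hw => ⟨(h w hw.1).2 hw, hw.1⟩⟩
  have hfix : node G x = if h : ∃ b, ∃ _ : b < x, node G b = b ∧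
      ∀ w, w < x → (w ∈ bag G b ↔ w ∈ earlierNbrs G x) then h.choose else x := by
    rw [node, WellFoundedLT.fix_eq]
    rfl
  simp only [← hbag, exists_prop] at hfix
  split_ifs at hfix with h
  · obtain ⟨hlt, hnode, heq⟩ := h.choose_spec
    exact Or.inr ⟨hfix ▸ hlt, hfix ▸ hnode, hfix ▸ heq⟩
  · exact Or.inl ⟨hfix, h⟩

lemma node_node (x : V) : node G (node G x) = node G x := by
  rcases node_cases x with ⟨h, -⟩ | ⟨-, h, -⟩
  · rw [h, h]
  · exact h

lemma node_le (x : V) : node G x ≤ x := by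
  rcases node_cases x with ⟨h, -⟩ | ⟨h, -⟩
  · exact h.le
  · exact h.le

lemma mem_bag_node (x : V) : x ∈ bag G (node G x) := Or.inr (Or.inr rfl)

lemma earlierNbrs_subset_bag_node (x : V) : earlierNbrs G x ⊆ bag G (node G x) := by
  rcases node_cases x with ⟨h, -⟩ | ⟨-, -, h⟩
  · exact fun w hw => Or.inr (Or.inl (h.symm ▸ hw))
  · intro w hw
    rw [← h] at hw
    exact hw.1

lemma node_mem_subtree (x : V) :
    ((⟨node G x, node_node x⟩ : Node G) : WithBot (Node G)) ∈ subtree G x :=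
  ⟨_, mem_bag_node x, rfl⟩

lemma node_spec_of_ne {w b : V} (hw : node G w = b) (hne : w ≠ b) :
    b < w ∧ node G b = b ∧ bag G b ∩ Iio w = earlierNbrs G w := by
  rcases node_cases w with ⟨h, -⟩ | h
  · exact absurd (h.symm.trans hw) hne
  · exact hw ▸ h

lemma mem_earlierNbrs_of_mem_bag {b w : V} (hb : node G b = b) (hw : w ∈ bag G b) (hwb : w < b) :
    w ∈ earlierNbrs G b := by
  rcases hw with rfl | hw | hw
  · exact absurd hwb (lt_irrefl _)
  · exact hw
  · exact absurd hwb (not_lt.2 (hw ▸ node_le w))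

lemma node_eq_of_dominates {z b : V} (hz : IsCovered G z) (hz' : IsAntichainBefore G z)
    (hb : node G b = b) (hbz : b < z) (hdom : ∀ w ∈ bag G b ∩ Iio z, G.Adj z w) :
    node G z = b := by
  have hsub : bag G b ∩ Iio z ⊆ earlierNbrs G z := fun w hw => ⟨hw.2, hdom w hw⟩
  obtain ⟨b', hb'z, hb', hsub'⟩ := hz ⟨b, hsub ⟨Or.inl rfl, hbz⟩⟩
  obtain rfl : b = b' := hz' b b' hb hb' hbz hb'z fun w hw => ⟨hsub' (hsub hw), hw.2⟩
  have heq : bag G b ∩ Iio z = earlierNbrs G z := hsub.antisymm fun w hw => ⟨hsub' hw, hw.1⟩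
  rcases node_cases z with ⟨-, h⟩ | ⟨hlt, hnode, h⟩
  · exact absurd ⟨b, hbz, hb, heq⟩ h
  · exact hz' _ _ hnode hb hlt hbz (h.trans heq.symm).subset

lemma isAntichainBefore_of_forall_lt {x : V}
    (ih : ∀ z < x, IsCovered G z ∧ IsAntichainBefore G z) : IsAntichainBefore G x := by
  intro b b' hb hb' hbx hb'x hsub
  by_contra hne
  have hbb' : b ∈ earlierNbrs G b' := by
    rcases (hsub ⟨Or.inl rfl, hbx⟩).1 with h | h | h
    · exact absurd h hne
    · exact h
    · exact absurd (hb.symm.trans h) hne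
  have hb'b : b' ∉ bag G b := by
    rintro (h | h | h)
    · exact hne h.symm
    · exact lt_asymm hbb'.1 h.1
    · exact hne (hb'.symm.trans h).symm
  have hclaim : bag G b ∩ Iio x ⊆ earlierNbrs G b' := by
    rintro w ⟨hw, hwx⟩
    have hwb' : w ≠ b' := by rintro rfl; exact hb'b hw
    rcases (hsub ⟨hw, hwx⟩).1 with h | h | h
    · exact absurd h hwb'
    · exact h
    · have hb'w := (node_spec_of_ne h hwb').1
      rcases hw with rfl | h' | h'
      · exact absurd (hb.symm.trans h) hne
      · exact absurd (h'.1.trans (hbb'.1.trans hb'w)) (lt_irrefl _)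
      · exact absurd (h'.symm.trans h) hne
  obtain ⟨bs, hbsb', hbs, hsubs⟩ := (ih b' hb'x).1 ⟨b, hbb'⟩
  obtain rfl : b = bs := (ih b' hb'x).2 b bs hb hbs hbb'.1 hbsb' fun w hw =>
    ⟨hsubs (hclaim ⟨hw.1, hw.2.trans hb'x⟩), hw.2⟩
  have heq : bag G b ∩ Iio b' = earlierNbrs G b' :=
    subset_antisymm (fun w hw => hclaim ⟨hw.1, hw.2.trans hb'x⟩) fun w hw => ⟨hsubs hw, hw.1⟩
  rcases node_cases b' with ⟨-, h⟩ | ⟨h, -⟩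
  · exact h ⟨b, hbb'.1, hb, heq⟩
  · exact absurd hb' h.ne

section

variable (hE : ∀ x, G.IsClique (earlierNbrs G x))
include hE

lemma isClique_bag {b : V} (hb : node G b = b) : G.IsClique (bag G b) := by
  have key : ∀ w ∈ bag G b, ∀ w' ∈ bag G b, w < w' → G.Adj w' w := by
    intro w hw w' hw' hww'
    by_cases hw'b : node G w' = b ∧ w' ≠ b
    · have h := (node_spec_of_ne hw'b.1 hw'b.2).2.2
      have : w ∈ earlierNbrs G w' := h ▸ ⟨hw, hww'⟩
      exact this.2
    · have hw'b : w' = b ∨ w' ∈ earlierNbrs G b := by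
        rcases hw' with h | h | h
        exacts [Or.inl h, Or.inr h, Or.inl (not_and_not_right.1 hw'b h)]
      rcases hw'b with rfl | hw'
      · exact (mem_earlierNbrs_of_mem_bag hb hw hww').2
      · have hwb := mem_earlierNbrs_of_mem_bag hb hw (hww'.trans hw'.1)
        exact hE b hw' hwb hww'.ne'
  intro w hw w' hw' hne
  rcases hne.lt_or_gt with h | h
  · exact (key w hw w' hw' h).symm
  · exact key w' hw' w hw h

lemma isCovered_of_forall_lt (hbad : ¬ ∃ v, IsBadCliqueSeq G v) {x : V}
    (ih : ∀ z < x, IsCovered G z ∧ IsAntichainBefore G z) : IsCovered G x := by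
  intro hne
  by_contra! hnot
  have hbelow : ∀ u ∈ earlierNbrs G x, ∀ w ∈ earlierNbrs G x, w ≤ u → w ∈ bag G (node G u) := by
    intro u hu w hw hwu
    rcases hwu.lt_or_eq with h | rfl
    · exact earlierNbrs_subset_bag_node u ⟨h, hE x hu hw h.ne'⟩
    · exact mem_bag_node w
  have hstep : ∀ u : earlierNbrs G x, ∃ w : earlierNbrs G x, (w : V) ∉ bag G (node G u) :=
    fun u => by
      obtain ⟨w, hw, hwb⟩ :=
        not_subset.1 (hnot _ ((node_le u.1).trans_lt u.2.1) (node_node u.1))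
      exact ⟨⟨w, hw⟩, hwb⟩
  choose next hnext using hstep
  let u : ℕ → earlierNbrs G x := fun i => next^[i] ⟨hne.some, hne.some_mem⟩
  have hu : ∀ i, u (i + 1) = next (u i) := fun i => Function.iterate_succ_apply' _ _ _
  have hnotin : ∀ i, (u (i + 1) : V) ∉ bag G (node G (u i)) := fun i => hu i ▸ hnext (u i)
  have hmono : StrictMono fun i => (u i : V) := strictMono_nat_of_lt_succ fun i => by
    by_contra! h
    exact hnotin i (hbelow _ (u i).2 _ (u (i + 1)).2 h)
  -- `node (u (i + 1)) ≠ node (u i)`, so some vertex of the bag of `u i` misses `u (i + 1)`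
  have hwit : ∀ i, ∃ w ∈ bag G (node G (u i)), w < u (i + 1) ∧ ¬ G.Adj (u (i + 1)) w := by
    intro i
    by_contra! hdom
    have hz := ih _ (u (i + 1)).2.1
    have := node_eq_of_dominates hz.1 hz.2 (node_node (u i).1)
      ((node_le _).trans_lt (hmono (Nat.lt_succ_self i))) fun w hw => hdom w hw.1 hw.2
    exact hnotin i (this ▸ mem_bag_node _)
  choose w hwbag hwlt hwadj using hwit
  refine hbad ⟨fun i => u (i + 1), isBadCliqueSeq_of_isClique (hE x) (fun i => (u (i + 1)).2)
    fun i => ⟨w i, fun h => hnotin i (h ▸ hwbag i), fun j hj => ?_, fun h => hwadj i h.symm⟩⟩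
  have hj' : (u (j + 1) : V) ∈ bag G (node G (u i)) :=
    hbelow _ (u i).2 _ (u (j + 1)).2 (hmono.monotone (Nat.succ_le_of_lt hj))
  refine isClique_bag hE (node_node _) (hwbag i) hj' fun heq => hwadj i ?_
  exact heq ▸ hE x (u (i + 1)).2 (u (j + 1)).2 (hmono.injective.ne (by omega))

theorem isCovered_and_isAntichainBefore (hbad : ¬ ∃ v, IsBadCliqueSeq G v) (x : V) :
    IsCovered G x ∧ IsAntichainBefore G x := by
  induction x using WellFoundedLT.induction with
  | _ x ih => exact ⟨isCovered_of_forall_lt hE hbad ih, isAntichainBefore_of_forall_lt ih⟩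

lemma exists_parent (hbad : ¬ ∃ v, IsBadCliqueSeq G v) (b : Node G) :
    ∃ a : WithBot (Node G), a < b ∧ ∀ w ∈ earlierNbrs G b, a ∈ subtree G w := by
  rcases (earlierNbrs G b).eq_empty_or_nonempty with h | h
  · exact ⟨⊥, WithBot.bot_lt_coe b, by simp [h]⟩
  · obtain ⟨a, hab, ha, hsub⟩ := (isCovered_and_isAntichainBefore hE hbad b).1 h
    exact ⟨(⟨a, ha⟩ : Node G), WithBot.coe_lt_coe.2 hab, fun w hw => ⟨⟨a, ha⟩, hsub hw, rfl⟩⟩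

lemma adj_iff_nonempty_subtree_inter (x y : V) :
    G.Adj x y ↔ x ≠ y ∧ (subtree G x ∩ subtree G y).Nonempty := by
  refine ⟨fun hxy => ⟨hxy.ne, ?_⟩, fun ⟨hne, a, hax, hay⟩ => ?_⟩
  · wlog h : x < y generalizing x y
    · obtain ⟨a, hay, hax⟩ := this y x hxy.symm (lt_of_le_of_ne (not_lt.1 h) hxy.ne')
      exact ⟨a, hax, hay⟩
    exact ⟨_, ⟨_, earlierNbrs_subset_bag_node y ⟨h, hxy.symm⟩, rfl⟩, node_mem_subtree y⟩
  · obtain ⟨c, hxc, rfl⟩ := hax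
    obtain ⟨d, hyd, hdc⟩ := hay
    rw [WithBot.coe_injective hdc] at hyd
    exact isClique_bag hE c.2 hxc hyd hne

end

/-- Walking up from any node containing `x` stays inside the subtree of `x` and reaches the node
of `x`. -/
lemma connected_induce_subtree {par : Node G → WithBot (Node G)}
    (hlt : ∀ c : Node G, par c < c)
    (hmem : ∀ c : Node G, ∀ w ∈ earlierNbrs G c, par c ∈ subtree G w)
    (x : V) : ((SimpleGraph.fromRel fun a b => WithBot.recBotCoe ⊥ par a = b).induce
      (subtree G x)).Connected := by
  have hreach : ∀ c : Node G, ∀ hc : ↑c ∈ subtree G x,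
      ((SimpleGraph.fromRel fun a b => WithBot.recBotCoe ⊥ par a = b).induce
        (subtree G x)).Reachable ⟨c, hc⟩ ⟨_, node_mem_subtree x⟩ := by
    intro c
    induction c using WellFoundedLT.induction with
    | _ c ih =>
      intro hc
      obtain ⟨c', hxc, hcc'⟩ := hc
      rw [WithBot.coe_injective hcc'] at hxc
      by_cases hxc' : node G x = c
      · obtain rfl : (⟨node G x, node_node x⟩ : Node G) = c := Subtype.ext hxc'
        rfl
      · have hxE : x ∈ earlierNbrs G c := by
          rcases hxc with h | h | h
          · exact absurd (h ▸ c.2) hxc'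
          · exact h
          · exact absurd h hxc'
        obtain ⟨d, hd, hdc⟩ := hmem c x hxE
        have hdc' : (d : WithBot (Node G)) < c := hdc ▸ hlt c
        have hadj : (SimpleGraph.fromRel fun a b => WithBot.recBotCoe ⊥ par a = b).Adj
            (c : WithBot (Node G)) d :=
          (SimpleGraph.fromRel_adj _ _ _).2 ⟨hdc'.ne', Or.inl hdc.symm⟩
        refine SimpleGraph.Reachable.trans (SimpleGraph.Adj.reachable ?_)
          (ih d (WithBot.coe_lt_coe.1 hdc') ⟨d, hd, rfl⟩)
        exact hadj
  have : Nonempty (subtree G x) := ⟨⟨_, node_mem_subtree x⟩⟩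
  exact ⟨fun ⟨a, ha⟩ ⟨b, hb⟩ => by
    obtain ⟨c, -, rfl⟩ := ha
    obtain ⟨d, -, rfl⟩ := hb
    exact (hreach c _).trans (hreach d _).symm⟩

theorem exists_subtree_representation (hE : ∀ x, G.IsClique (earlierNbrs G x))
    (hbad : ¬ ∃ v, IsBadCliqueSeq G v) :
    ∃ (W : Type u) (T : SimpleGraph W) (t : V → Set W), T.IsTree ∧
      (∀ x : V, (T.induce (t x)).Connected) ∧
      ∀ x y : V, G.Adj x y ↔ x ≠ y ∧ (t x ∩ t y).Nonempty := by
  choose par hlt hmem using exists_parent hE hbad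
  refine ⟨_, _, subtree G, isTree_fromRel_parent (WithBot.recBotCoe ⊥ par) ⊥ rfl fun a ha => ?_,
    connected_induce_subtree hlt hmem, adj_iff_nonempty_subtree_inter hE⟩
  obtain ⟨c, rfl⟩ := WithBot.ne_bot_iff_exists.1 ha
  exact hlt c

end EliminationTree

/-- Strengthened Halin theorem: a chordal graph, none of whose countable cliques can be
enumerated as `v₀, v₁, …` so that for each `i` some vertex (other than `vᵢ`) is adjacent
to all of `v₀, …, v_{i-1}` but not to `vᵢ`, is the intersection graph of a family of
subtrees of a tree. -/
theorem stmt10 {V : Type u} (G : SimpleGraph V) (hchordal : Chordal G)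
    (h : ¬ ∃ v : ℕ → V, Function.Injective v ∧
        (∀ i j : ℕ, i ≠ j → G.Adj (v i) (v j)) ∧
        ∀ i : ℕ, ∃ w : V, w ≠ v i ∧ (∀ j : ℕ, j < i → G.Adj w (v j)) ∧ ¬ G.Adj w (v i)) :
    ∃ (W : Type u) (T : SimpleGraph W) (t : V → Set W), T.IsTree ∧
      (∀ x : V, (T.induce (t x)).Connected) ∧
      ∀ x y : V, G.Adj x y ↔ x ≠ y ∧ (t x ∩ t y).Nonempty := by
  obtain ⟨r, hr, hE⟩ := hchordal.exists_wellOrder_isClique_earlier h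
  let := IsWellOrder.linearOrder r
  have : WellFoundedLT V := hr.toIsWellFounded
  exact EliminationTree.exists_subtree_representation hE h
end

section
/- Let F be a family of subsets of W and suppose there exist distinct v₁, v₂, v₃ ∈ W and F-connected sets X₁, X₂, X₃ ⊆ W such that v_i ∈ X_j iff i ≠ j for all i, j ∈ {1,2,3}. Then there is no linear order on W under which every member of F is an interval. -/
open Set

universe u

/-! Every `F`-connected set `X` is itself an interval, since a point `v ∉ X` lying
between two points of `X` would cut `X` into the parts below and above `v`, and a member of `F`
inside `X` meeting both parts would have to contain `v`. Of three points in a linear order one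
lies between the other two, so the `Xᵢ` missing that point is not an interval. -/

section Intervals

variable {W : Type u} (r : W → W → Prop)

def IsIntervalFor (X : Set W) : Prop :=
  ∀ a b c : W, r a b → r b c → a ∈ X → c ∈ X → b ∈ X

def RelBetween (a b c : W) : Prop :=
  (r a b ∧ r b c) ∨ (r c b ∧ r b a)

variable {r}

theorem IsIntervalFor.mem_of_relBetween {X : Set W} (hX : IsIntervalFor r X) {a b c : W}
    (hb : RelBetween r a b c) (ha : a ∈ X) (hc : c ∈ X) : b ∈ X := by
  rcases hb with ⟨hab, hbc⟩ | ⟨hcb, hba⟩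
  · exact hX a b c hab hbc ha hc
  · exact hX c b a hcb hba hc ha

theorem relBetween_trichotomy [Std.Total r] (x y z : W) :
    RelBetween r x y z ∨ RelBetween r y x z ∨ RelBetween r x z y := by
  unfold RelBetween
  rcases total_of r x y with hxy | hyx <;> rcases total_of r y z with hyz | hzy <;>
    rcases total_of r x z with hxz | hzx <;> tauto

theorem FConnected.isIntervalFor [Std.Total r] [Std.Antisymm r] {F : Set (Set W)} {X : Set W}
    (hX : FConnected F X) (hF : ∀ S ∈ F, IsIntervalFor r S) : IsIntervalFor r X := by
  intro a v b hav hvb ha hb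
  by_contra hv
  have hcover : {x ∈ X | r x v} ∪ {x ∈ X | r v x} = X := by
    ext x
    constructor
    · rintro (⟨hx, -⟩ | ⟨hx, -⟩) <;> exact hx
    · intro hx
      exact (total_of r x v).imp (fun h => ⟨hx, h⟩) (fun h => ⟨hx, h⟩)
  have hdisj : {x ∈ X | r x v} ∩ {x ∈ X | r v x} = ∅ := by
    refine eq_empty_of_forall_notMem ?_
    rintro x ⟨⟨hx, hxv⟩, -, hvx⟩
    exact hv (antisymm hxv hvx ▸ hx)
  obtain ⟨S, hSF, hSX, ⟨p, hpS, -, hpv⟩, ⟨q, hqS, -, hvq⟩⟩ :=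
    hX _ _ hcover hdisj ⟨a, ha, hav⟩ ⟨b, hb, hvb⟩
  exact hv (hSX (hF S hSF p v q hpv hvq hpS hqS))

end Intervals

theorem stmt13_general {W : Type u} (F : Set (Set W)) (v₁ v₂ v₃ : W) (X₁ X₂ X₃ : Set W)
    (hX₁ : FConnected F X₁) (hX₂ : FConnected F X₂) (hX₃ : FConnected F X₃)
    (h11 : v₁ ∉ X₁) (h12' : v₁ ∈ X₂) (h13' : v₁ ∈ X₃)
    (h21 : v₂ ∈ X₁) (h22 : v₂ ∉ X₂) (h23' : v₂ ∈ X₃)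
    (h31 : v₃ ∈ X₁) (h32 : v₃ ∈ X₂) (h33 : v₃ ∉ X₃) :
    ¬ ∃ r : W → W → Prop, IsLinearOrder W r ∧
        ∀ S ∈ F, ∀ a b c : W, r a b → r b c → a ∈ S → c ∈ S → b ∈ S := by
  rintro ⟨r, hr, hF⟩
  have hconn {X : Set W} (hX : FConnected F X) : IsIntervalFor r X := hX.isIntervalFor hF
  rcases relBetween_trichotomy (r := r) v₁ v₂ v₃ with h | h | h
  · exact h22 ((hconn hX₂).mem_of_relBetween h h12' h32)
  · exact h11 ((hconn hX₁).mem_of_relBetween h h21 h31)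
  · exact h33 ((hconn hX₃).mem_of_relBetween h h13' h23')

/-- The easy direction: an asteroidal triple of vertices and `F`-connected sets rules out
any linear order on `W` making every member of `F` an interval. -/
theorem stmt13 {W : Type u} (F : Set (Set W)) (v₁ v₂ v₃ : W) (X₁ X₂ X₃ : Set W)
    (h12 : v₁ ≠ v₂) (h13 : v₁ ≠ v₃) (h23 : v₂ ≠ v₃)
    (hX₁ : FConnected F X₁) (hX₂ : FConnected F X₂) (hX₃ : FConnected F X₃)
    (h11 : v₁ ∉ X₁) (h12' : v₁ ∈ X₂) (h13' : v₁ ∈ X₃)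
    (h21 : v₂ ∈ X₁) (h22 : v₂ ∉ X₂) (h23' : v₂ ∈ X₃)
    (h31 : v₃ ∈ X₁) (h32 : v₃ ∈ X₂) (h33 : v₃ ∉ X₃) :
    ¬ ∃ r : W → W → Prop, IsLinearOrder W r ∧
        ∀ S ∈ F, ∀ a b c : W, r a b → r b c → a ∈ S → c ∈ S → b ∈ S :=
  stmt13_general F v₁ v₂ v₃ X₁ X₂ X₃ hX₁ hX₂ hX₃ h11 h12' h13' h21 h22 h23' h31 h32 h33
end

section
/- Let k ≥ 0 be an integer and let G be a (possibly infinite) graph such that every finite subgraph of G has path-width at most k. Then G has line-width at most k. -/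
open Set

universe u

/-!
A path-decomposition of a finite graph is the same as a representation of its vertices by
integer intervals in which adjacent vertices get intersecting intervals and every point lies
in at most `k + 1` intervals. Fix an ultrafilter on the finite vertex sets `U` of `G` that
contains every `{U | U₀ ⊆ U}`, and take the ultralimit of the interval representations of
the subgraphs `G[U]`: it lives in the ultrapower of `ℕ`, which is linearly ordered. Each of
the defining properties speaks about finitely many vertices at a time, so it holds for almost
every `U` and hence in the limit. The bags of the line-decomposition, indexed by the
ultrapower, are the sets of vertices whose interval contains the index.
-/

open Filter

variable {V W : Type u}

theorem Set.finite_of_forall_finset_card_le {s : Set W} {m : ℕ}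
    (h : ∀ t : Finset W, ↑t ⊆ s → t.card ≤ m) : s.Finite := by
  by_contra hs
  obtain ⟨t, hts, htc⟩ := Set.Infinite.exists_subset_card_eq hs (m + 1)
  have := h t hts
  omega

namespace IsPathDecomp

variable [DecidableEq W] {H : SimpleGraph W} {n : ℕ} {B : Fin n → Finset W}

theorem nonempty_filter_mem (hB : IsPathDecomp H B) (w : W) :
    (Finset.univ.filter fun i => w ∈ B i).Nonempty :=
  let ⟨i, hi⟩ := hB.1 w
  ⟨i, Finset.mem_filter.2 ⟨Finset.mem_univ i, hi⟩⟩

noncomputable def first (hB : IsPathDecomp H B) (w : W) : Fin n :=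
  (Finset.univ.filter fun i => w ∈ B i).min' (hB.nonempty_filter_mem w)

noncomputable def last (hB : IsPathDecomp H B) (w : W) : Fin n :=
  (Finset.univ.filter fun i => w ∈ B i).max' (hB.nonempty_filter_mem w)

theorem mem_iff (hB : IsPathDecomp H B) {w : W} {i : Fin n} :
    w ∈ B i ↔ hB.first w ≤ i ∧ i ≤ hB.last w := by
  have hfirst := Finset.min'_mem _ (hB.nonempty_filter_mem w)
  have hlast := Finset.max'_mem _ (hB.nonempty_filter_mem w)
  simp only [Finset.mem_filter, Finset.mem_univ, true_and] at hfirst hlast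
  refine ⟨fun hi => ⟨Finset.min'_le _ _ ?_, Finset.le_max' _ _ ?_⟩,
    fun ⟨h₁, h₂⟩ => hB.2.2 w _ i _ h₁ h₂ hfirst hlast⟩ <;> simpa using hi

theorem first_le_last (hB : IsPathDecomp H B) (w : W) : hB.first w ≤ hB.last w :=
  let ⟨_, hi⟩ := hB.1 w
  ((hB.mem_iff.1 hi).1).trans (hB.mem_iff.1 hi).2

theorem first_le_last_of_adj (hB : IsPathDecomp H B) {u w : W} (huw : H.Adj u w) :
    hB.first u ≤ hB.last w :=
  let ⟨_, hu, hw⟩ := hB.2.1 u w huw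
  (hB.mem_iff.1 hu).1.trans (hB.mem_iff.1 hw).2

end IsPathDecomp

/-- Each vertex `v ∈ U` is represented by the interval `[α v, β v]` of `L`; the second field
makes the intervals of adjacent vertices intersect. -/
structure IsIntervalModelOn {L : Type*} [LE L] (G : SimpleGraph V) (U : Set V) (k : ℕ)
    (α β : V → L) : Prop where
  le : ∀ v ∈ U, α v ≤ β v
  le_of_adj : ∀ u ∈ U, ∀ v ∈ U, G.Adj u v → α u ≤ β v
  card_le : ∀ (g : L) (s : Finset V), ↑s ⊆ U → (∀ v ∈ s, α v ≤ g ∧ g ≤ β v) → s.card ≤ k + 1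

theorem PathWidthLE.exists_isIntervalModelOn {G : SimpleGraph V} {U : Finset V} {k : ℕ}
    (h : PathWidthLE (G.induce (U : Set V)) k) :
    ∃ a b : V → ℕ, IsIntervalModelOn G U k a b := by
  classical
  obtain ⟨n, B, hB, hcard⟩ := h
  refine ⟨fun v => if hv : v ∈ U then hB.first ⟨v, hv⟩ else 0,
    fun v => if hv : v ∈ U then hB.last ⟨v, hv⟩ else 0, ⟨fun v hv => ?_, fun u hu v hv huv => ?_,
    fun i s hs hi => ?_⟩⟩
  · rw [Finset.mem_coe] at hv
    simpa [hv] using hB.first_le_last ⟨v, hv⟩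
  · rw [Finset.mem_coe] at hu hv
    simpa [hu, hv] using
      hB.first_le_last_of_adj (show (G.induce (U : Set V)).Adj ⟨u, hu⟩ ⟨v, hv⟩ from huv)
  · rcases s.eq_empty_or_nonempty with rfl | ⟨v₀, hv₀⟩
    · simp
    have hi_lt : i < n := by
      have := (hi v₀ hv₀).2
      simp only [Finset.mem_coe.1 (hs hv₀), dite_true] at this
      omega
    have hs_bag : s ⊆ (B ⟨i, hi_lt⟩).map (Function.Embedding.subtype _) := fun v hv => by
      have hvU : v ∈ U := hs hv
      have := hi v hv
      simp only [hvU, dite_true] at this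
      exact Finset.mem_map.2 ⟨⟨v, hvU⟩, hB.mem_iff.2 ⟨Fin.le_def.2 this.1, Fin.le_def.2 this.2⟩, rfl⟩
    calc s.card ≤ ((B ⟨i, hi_lt⟩).map (Function.Embedding.subtype _)).card :=
          Finset.card_le_card hs_bag
      _ ≤ k + 1 := (Finset.card_map _).trans_le (hcard _)

theorem exists_isIntervalModelOn_univ_germ {G : SimpleGraph V} {k : ℕ}
    (h : ∀ U : Finset V, ∃ a b : V → ℕ, IsIntervalModelOn G U k a b) :
    ∃ α β : V → (Ultrafilter.of (atTop : Filter (Finset V)) : Filter (Finset V)).Germ ℕ,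
      IsIntervalModelOn G Set.univ k α β := by
  classical
  choose a b hab using h
  set φ := Ultrafilter.of (atTop : Filter (Finset V))
  have hφ : ∀ s : Finset V, ∀ᶠ U in (φ : Filter (Finset V)), s ⊆ U := fun s =>
    Ultrafilter.of_le _ (eventually_ge_atTop s)
  refine ⟨fun v => ((a · v) : Germ _ ℕ), fun v => ((b · v) : Germ _ ℕ),
    ⟨fun v _ => ?_, fun u _ v _ huv => ?_, fun g s _ hs => ?_⟩⟩
  · exact Germ.coe_le.2 <| (hφ {v}).mono fun U hU => (hab U).le v (by simpa using hU)
  · exact Germ.coe_le.2 <| (hφ ({u, v} : Finset V)).mono fun U hU =>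
      (hab U).le_of_adj u (hU (by simp)) v (hU (by simp)) huv
  · induction g using Germ.inductionOn with | h f => ?_
    have hs' : ∀ᶠ U in (φ : Filter (Finset V)), ∀ v ∈ s, a U v ≤ f U ∧ f U ≤ b U v :=
      (eventually_all_finset s).2 fun v hv =>
        (Germ.coe_le.1 (hs v hv).1).and (Germ.coe_le.1 (hs v hv).2)
    obtain ⟨U, hsU, hU⟩ := ((hφ s).and hs').exists
    exact (hab U).card_le (f U) s hsU hU

theorem IsIntervalModelOn.lineWidthLE {L : Type u} [LinearOrder L] {G : SimpleGraph V} {k : ℕ}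
    {α β : V → L} (h : IsIntervalModelOn G Set.univ k α β) : LineWidthLE G k := by
  have hfin : ∀ g, {v | α v ≤ g ∧ g ≤ β v}.Finite := fun g =>
    Set.finite_of_forall_finset_card_le fun s hs => h.card_le g s (Set.subset_univ _) hs
  refine ⟨L, (· ≤ ·), inferInstance, fun g => (hfin g).toFinset, fun v => ⟨α v, ?_⟩,
    fun u v huv => ⟨max (α u) (α v), ?_, ?_⟩, fun v g g' g'' h₁ h₂ hg hg'' => ?_,
    fun g => h.card_le g _ (Set.subset_univ _) fun v hv => (hfin g).mem_toFinset.1 hv⟩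
    <;> simp only [Set.Finite.mem_toFinset, Set.mem_ofPred_eq] at *
  · exact ⟨le_rfl, h.le v trivial⟩
  · exact ⟨le_max_left _ _, max_le (h.le u trivial) (h.le_of_adj v trivial u trivial huv.symm)⟩
  · exact ⟨le_max_right _ _, max_le (h.le_of_adj u trivial v trivial huv) (h.le v trivial)⟩
  · exact ⟨hg.1.trans h₁, h₂.trans hg''.2⟩

/-- If every finite subgraph of `G` has path-width at most `k`, then `G` has line-width
at most `k`. -/
theorem stmt14 {V : Type u} (G : SimpleGraph V) (k : ℕ)
    (h : ∀ U : Finset V, PathWidthLE (G.induce (↑U : Set V)) k) :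
    LineWidthLE G k := by
  obtain ⟨α, β, hαβ⟩ :=
    exists_isIntervalModelOn_univ_germ fun U => (h U).exists_isIntervalModelOn
  exact hαβ.lineWidthLE
end

section
/- Let T be a tree with vertex set W, and let F be a family of subsets of W each of which induces a connected subgraph of T. Then the intersection graph of F is chordal. -/
/-!
Suppose `S₀, …, S_{n-1}` (`n ≥ 4`) form an induced cycle and pick `xᵢ ∈ Sᵢ ∩ Sᵢ₊₁`. The tree
path from `x₀` to `x₁` is unique, so it is both the path inside `S₁` and the path obtained by
going the long way round the cycle through the `Sⱼ` with `j ≠ 1`. Hence each of its edges lies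
in `S₁` and in some `Sⱼ` with `j ≠ 1`, which forces `j ∈ {0, 2}`. As `S₀` and `S₂` are disjoint,
such a path cannot lead from `x₀ ∈ S₀` to `x₁ ∈ S₂`.
-/

open Set

universe u

lemma ZMod.natCast_ne_zero_of_lt {n k : ℕ} (hk : 0 < k) (hkn : k < n) : (k : ZMod n) ≠ 0 :=
  fun h => absurd (Nat.le_of_dvd hk ((ZMod.natCast_eq_zero_iff k n).mp h)) (by omega)

namespace SimpleGraph

variable {V : Type*} {G H₁ H₂ : SimpleGraph V}

def withinSets (G : SimpleGraph V) (𝒮 : Set (Set V)) : SimpleGraph V where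
  Adj a b := G.Adj a b ∧ ∃ S ∈ 𝒮, a ∈ S ∧ b ∈ S
  symm := ⟨fun _ _ ⟨hab, S, hS, ha, hb⟩ => ⟨hab.symm, S, hS, hb, ha⟩⟩
  loopless := ⟨fun a h => G.loopless.irrefl a h.1⟩

@[simp]
lemma withinSets_adj {𝒮 : Set (Set V)} {a b : V} :
    (G.withinSets 𝒮).Adj a b ↔ G.Adj a b ∧ ∃ S ∈ 𝒮, a ∈ S ∧ b ∈ S := Iff.rfl

lemma withinSets_le (𝒮 : Set (Set V)) : G.withinSets 𝒮 ≤ G := fun _ _ h => (withinSets_adj.mp h).1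

lemma withinSets_mono {𝒮 𝒯 : Set (Set V)} (h : 𝒮 ⊆ 𝒯) : G.withinSets 𝒮 ≤ G.withinSets 𝒯 :=
  fun _ _ ⟨hab, S, hS, ha, hb⟩ => ⟨hab, S, h hS, ha, hb⟩

lemma withinSets_singleton_inf_le (A : Set V) (𝒮 : Set (Set V)) :
    G.withinSets {A} ⊓ G.withinSets 𝒮 ≤ G.withinSets {B ∈ 𝒮 | (A ∩ B).Nonempty} :=
  fun a _ ⟨⟨hab, _, rfl, ha, _⟩, _, B, hB, haB, hbB⟩ => ⟨hab, B, ⟨hB, a, ha, haB⟩, haB, hbB⟩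

lemma reachable_withinSets {𝒮 : Set (Set V)} {S : Set V} (hS : S ∈ 𝒮)
    (hconn : (G.induce S).Preconnected) {a b : V} (ha : a ∈ S) (hb : b ∈ S) :
    (G.withinSets 𝒮).Reachable a b :=
  (hconn ⟨a, ha⟩ ⟨b, hb⟩).map
    ⟨Subtype.val, fun {u v} huv => withinSets_adj.mpr ⟨huv, S, hS, u.2, v.2⟩⟩

lemma Reachable.mem_of_withinSets {𝒮 : Set (Set V)} (h𝒮 : 𝒮.PairwiseDisjoint id)
    {A : Set V} (hA : A ∈ 𝒮) {a b : V} (hab : (G.withinSets 𝒮).Reachable a b) (ha : a ∈ A) :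
    b ∈ A := by
  obtain ⟨w⟩ := hab
  induction w with
  | nil => exact ha
  | cons hadj _ ih =>
    obtain ⟨-, S, hS, hu, hv⟩ := withinSets_adj.mp hadj
    obtain rfl : S = A := h𝒮.elim_set hS hA _ hu ha
    exact ih hv

/-- In a forest the unique path between two vertices lies in every subgraph connecting them. -/
lemma IsAcyclic.reachable_inf (hG : G.IsAcyclic) (h₁ : H₁ ≤ G) (h₂ : H₂ ≤ G) {a b : V}
    (hr₁ : H₁.Reachable a b) (hr₂ : H₂.Reachable a b) : (H₁ ⊓ H₂).Reachable a b := by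
  classical
  obtain ⟨w₁⟩ := hr₁
  obtain ⟨w₂⟩ := hr₂
  have hpath : (w₁.mapLe h₁).bypass = (w₂.mapLe h₂).bypass :=
    congrArg Subtype.val ((hG.subsingleton_path a b).elim ⟨_, (w₁.mapLe h₁).bypass_isPath⟩
      ⟨_, (w₂.mapLe h₂).bypass_isPath⟩)
  refine ⟨(w₁.mapLe h₁).bypass.transfer _ fun e he => (edgeSet_inf H₁ H₂ ▸ ⟨?_, ?_⟩)⟩
  · exact w₁.edges_subset_edgeSet (by simpa using (w₁.mapLe h₁).edges_bypass_subset_edges he)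
  · rw [hpath] at he
    exact w₂.edges_subset_edgeSet (by simpa using (w₂.mapLe h₂).edges_bypass_subset_edges he)

lemma reachable_of_cyclic {n : ℕ} [NeZero n] (x : ZMod n → V) (i : ZMod n)
    (hstep : ∀ j ≠ i, G.Reachable (x j) (x (j + 1))) : G.Reachable (x (i + 1)) (x i) := by
  have key (k : ℕ) (hk : k < n) : G.Reachable (x (i + 1)) (x (i + 1 + k)) := by
    induction k with
    | zero => simp
    | succ k ih =>
      have hne : i + 1 + k ≠ i := fun h =>
        ZMod.natCast_ne_zero_of_lt k.succ_pos hk (by push_cast; linear_combination h)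
      simpa [add_assoc] using (ih (by omega)).trans (hstep _ hne)
  have hn : 0 < n := Nat.pos_of_neZero n
  simpa [Nat.cast_sub hn] using key (n - 1) (by omega)

end SimpleGraph

namespace IntGraph

variable {W : Type u} {F : Set (Set W)} {n : ℕ} {f : ZMod n → F}

lemma cycle_eq_or_of_inter_nonempty (hinj : Function.Injective f)
    (hadj : ∀ i j, (IntGraph F).Adj (f i) (f j) ↔ (j = i + 1 ∨ i = j + 1)) {i j : ZMod n}
    (hij : ((f i : Set W) ∩ f j).Nonempty) : i = j ∨ j = i + 1 ∨ i = j + 1 :=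
  or_iff_not_imp_left.mpr fun hne => (hadj i j).mp ⟨hinj.ne hne, hij⟩

lemma cycle_disjoint_add_two (hn : 4 ≤ n) (hinj : Function.Injective f)
    (hadj : ∀ i j, (IntGraph F).Adj (f i) (f j) ↔ (j = i + 1 ∨ i = j + 1)) (i : ZMod n) :
    Disjoint (f i : Set W) (f (i + 2)) := by
  refine Set.disjoint_iff_inter_eq_empty.mpr (Set.not_nonempty_iff_eq_empty.mp fun hne => ?_)
  have h2 : ((2 : ℕ) : ZMod n) ≠ 0 := ZMod.natCast_ne_zero_of_lt (by omega) (by omega)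
  have h1 : ((1 : ℕ) : ZMod n) ≠ 0 := ZMod.natCast_ne_zero_of_lt (by omega) (by omega)
  have h3 : ((3 : ℕ) : ZMod n) ≠ 0 := ZMod.natCast_ne_zero_of_lt (by omega) (by omega)
  rcases cycle_eq_or_of_inter_nonempty hinj hadj hne with h | h | h
  · exact h2 (by push_cast; linear_combination -h)
  · exact h1 (by push_cast; linear_combination h)
  · exact h3 (by push_cast; linear_combination -h)

end IntGraph

/-- The intersection graph of a family of vertex sets of subtrees of a tree is chordal. -/
theorem stmt19 {W : Type u} (T : SimpleGraph W) (hT : T.IsTree)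
    (F : Set (Set W))
    (h : ∀ S ∈ F, (T.induce S).Connected) :
    ChordalProp F := by
  rintro ⟨n, hn, f, hinj, hadj⟩
  have : NeZero n := ⟨by omega⟩
  set S : ZMod n → Set W := fun i => f i
  have hconn (i : ZMod n) : (T.induce (S i)).Preconnected := (h _ (f i).2).preconnected
  choose x hx using fun i => ((hadj i (i + 1)).mpr (Or.inl rfl)).2
  have h02 : Disjoint (S 0) (S 2) := by
    simpa using IntGraph.cycle_disjoint_add_two hn hinj hadj 0
  have hshort : (T.withinSets {S 1}).Reachable (x 0) (x 1) :=
    SimpleGraph.reachable_withinSets (Set.mem_singleton _) (hconn 1) (by simpa using (hx 0).2)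
      (hx 1).1
  have hlong : (T.withinSets (S '' {1}ᶜ)).Reachable (x 0) (x 1) := by
    have := SimpleGraph.reachable_of_cyclic x 0 fun j hj =>
      SimpleGraph.reachable_withinSets (𝒮 := S '' {1}ᶜ) ⟨j + 1, by simpa using hj, rfl⟩
        (hconn _) (hx j).2 (hx (j + 1)).1
    simpa using this.symm
  have hmeet : {B ∈ S '' {1}ᶜ | (S 1 ∩ B).Nonempty} ⊆ {S 0, S 2} := by
    rintro _ ⟨⟨j, hj, rfl⟩, hne⟩
    rcases IntGraph.cycle_eq_or_of_inter_nonempty hinj hadj hne with heq | rfl | heq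
    · exact absurd heq.symm hj
    · simp [one_add_one_eq_two]
    · simp [show j = 0 by simpa using heq.symm]
  have hboth : (T.withinSets {S 0, S 2}).Reachable (x 0) (x 1) :=
    ((hT.isAcyclic.reachable_inf (T.withinSets_le _) (T.withinSets_le _) hshort hlong).mono
      ((T.withinSets_singleton_inf_le _ _).trans (T.withinSets_mono hmeet)))
  have hx10 : x 1 ∈ S 0 :=
    hboth.mem_of_withinSets (pairwise_pair.mpr fun _ => ⟨h02, h02.symm⟩) (Set.mem_insert _ _)
      (hx 0).1
  exact h02.ne_of_mem hx10 (by simpa [one_add_one_eq_two] using (hx 1).2) rfl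
end
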